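/- arXiv:1607.04622 — 7 statements merged into one kernel-verified Lean document; each statement's English description precedes it below -/
import Mathlib

section
/- Let Γ be a row-finite digraph and let M be a quiver representation of Γ assigning finite-dimensional vector spaces, such that for every non-sink vertex v the map ρ(v) → ⊕_{s(e)=v} ρ(t(e)) induced by the arrows is an isomorphism. If v₁,…,vₙ are the consecutive vertices of a cycle in the support subgraph of M (the full subgraph on vertices v with ρ(v) ≠ 0), then dim ρ(v₁) = dim ρ(v₂) = ⋯ = dim ρ(vₙ). -/
/-- Condition (I) for a quiver representation `(M, ρ)` of the digraph `(V, E, s, t)`: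
for every non-sink `v` the map `ρ(v) → ⊕_{s(e)=v} ρ(t(e))` with components `ρ(e)` is an
isomorphism (for a row-finite digraph the direct sum is the product). -/
def SatisfiesI (F : Type) [Field F] {V E : Type} (s t : E → V)
    (M : V → Type) [∀ v, AddCommGroup (M v)] [∀ v, Module F (M v)]
    (ρ : ∀ e : E, M (s e) →ₗ[F] M (t e)) : Prop :=
  ∀ v : V, (∃ e, s e = v) →
    Function.Bijective
      (fun (x : M v) (e : {e : E // s e = v}) => ρ e.1 (cast (congrArg M e.2.symm) x))

/-- A cycle: a closed directed path on pairwise distinct vertices. -/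
structure CycleData {V E : Type} (s t : E → V) where
  n : ℕ
  pos : 0 < n
  ve : ZMod n → V
  ed : ZMod n → E
  inj : Function.Injective ve
  hs : ∀ i, s (ed i) = ve i
  ht : ∀ i, t (ed i) = ve (i + 1)

/-- Cast along an equality of vertices as a linear equivalence. -/
def castLE (F : Type) [Field F] {V : Type} (M : V → Type)
    [∀ v, AddCommGroup (M v)] [∀ v, Module F (M v)] {v w : V} (h : v = w) :
    M v ≃ₗ[F] M w := h ▸ LinearEquiv.refl F (M v)

lemma castLE_eq_cast (F : Type) [Field F] {V : Type} (M : V → Type)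
    [∀ v, AddCommGroup (M v)] [∀ v, Module F (M v)] {v w : V} (h : v = w) (x : M v) :
    castLE F M h x = cast (congrArg M h) x := by
  subst h; rfl

/-- If `v₁, …, vₙ` are the consecutive vertices of a cycle lying in the support subgraph of a
finite-dimensional representation satisfying condition (I), then all the spaces `ρ(vᵢ)` have the
same dimension. -/
theorem stmt0 (F : Type) [Field F] {V E : Type} (s t : E → V)
    (hrow : ∀ v : V, {e : E | s e = v}.Finite)
    (M : V → Type) [∀ v, AddCommGroup (M v)] [∀ v, Module F (M v)]
    [∀ v, FiniteDimensional F (M v)]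
    (ρ : ∀ e : E, M (s e) →ₗ[F] M (t e))
    (hI : SatisfiesI F s t M ρ)
    (c : CycleData s t)
    (hsupp : ∀ i, Nontrivial (M (c.ve i))) :
    ∀ i j, Module.finrank F (M (c.ve i)) = Module.finrank F (M (c.ve j)) := by
  haveI : NeZero c.n := ⟨c.pos.ne'⟩
  -- Step 1: along each arrow of the cycle, the dimension does not increase.
  have key : ∀ i : ZMod c.n,
      Module.finrank F (M (c.ve (i + 1))) ≤ Module.finrank F (M (c.ve i)) := by
    intro i
    set v := c.ve i with hv
    haveI : Fintype {e : E // s e = v} := (hrow v).fintype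
    have hb := hI v ⟨c.ed i, c.hs i⟩
    set L : M v →ₗ[F] ∀ e : {e : E // s e = v}, M (t e.1) :=
      LinearMap.pi (fun e => (ρ e.1).comp (castLE F M e.2.symm).toLinearMap) with hL
    have hLb : Function.Bijective L := by
      have : ⇑L = fun (x : M v) (e : {e : E // s e = v}) =>
          ρ e.1 (cast (congrArg M e.2.symm) x) := by
        funext x e
        simp [hL, castLE_eq_cast]
      rw [this]; exact hb
    have hdim : Module.finrank F (M v) =
        ∑ e : {e : E // s e = v}, Module.finrank F (M (t e.1)) := by
      rw [(LinearEquiv.ofBijective L hLb).finrank_eq, Module.finrank_pi_fintype]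
    have hmem : (⟨c.ed i, c.hs i⟩ : {e : E // s e = v}) ∈ Finset.univ := Finset.mem_univ _
    have hle : Module.finrank F (M (t (c.ed i))) ≤
        ∑ e : {e : E // s e = v}, Module.finrank F (M (t e.1)) :=
      Finset.single_le_sum (f := fun e : {e : E // s e = v} =>
        Module.finrank F (M (t e.1))) (fun _ _ => Nat.zero_le _) hmem
    rw [hdim]
    have := c.ht i
    calc Module.finrank F (M (c.ve (i + 1)))
        = Module.finrank F (M (t (c.ed i))) := by rw [this]
      _ ≤ _ := hle
  -- Step 2: a function on `ZMod n` that is non-increasing along the cycle is constant.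
  have step : ∀ (i : ZMod c.n) (k : ℕ),
      Module.finrank F (M (c.ve (i + k))) ≤ Module.finrank F (M (c.ve i)) := by
    intro i k
    induction k with
    | zero => rw [Nat.cast_zero, add_zero]
    | succ k ih =>
        have hcast : ((k + 1 : ℕ) : ZMod c.n) = (k : ZMod c.n) + 1 := by push_cast; ring
        rw [hcast, ← add_assoc]
        exact (key (i + k)).trans ih
  intro i j
  have h1 : Module.finrank F (M (c.ve j)) ≤ Module.finrank F (M (c.ve i)) := by
    have := step i (j - i).val
    rwa [ZMod.natCast_val, ZMod.cast_id, add_sub_cancel] at this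
  have h2 : Module.finrank F (M (c.ve i)) ≤ Module.finrank F (M (c.ve j)) := by
    have := step j (i - j).val
    rwa [ZMod.natCast_val, ZMod.cast_id, add_sub_cancel] at this
  exact le_antisymm h2 h1
end

section
/- Let Γ be a row-finite digraph and let ρ be a quiver representation of Γ with values in finite-dimensional vector spaces satisfying condition (I). Then the cycles of the support subgraph of ρ have no exits: if v is a vertex on a cycle of the support subgraph with outgoing arrow e in Γ whose target is not the next vertex of the cycle, then ρ(t(e)) = 0. -/
def castLEquiv (F : Type) [Field F] {V : Type} (M : V → Type)
    [∀ v, AddCommGroup (M v)] [∀ v, Module F (M v)] {a b : V} (h : a = b) :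
    M a ≃ₗ[F] M b := by subst h; exact LinearEquiv.refl F (M a)

lemma castLEquiv_apply (F : Type) [Field F] {V : Type} (M : V → Type)
    [∀ v, AddCommGroup (M v)] [∀ v, Module F (M v)] {a b : V} (h : a = b) (x : M a) :
    castLEquiv F M h x = cast (congrArg M h) x := by subst h; rfl

lemma dim_eq (F : Type) [Field F] {V E : Type} (s t : E → V)
    (M : V → Type) [∀ v, AddCommGroup (M v)] [∀ v, Module F (M v)]
    [∀ v, FiniteDimensional F (M v)]
    (ρ : ∀ e : E, M (s e) →ₗ[F] M (t e))
    (hI : SatisfiesI F s t M ρ) (v : V) [Fintype {e : E // s e = v}]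
    (hv : ∃ e, s e = v) :
    Module.finrank F (M v) = ∑ e : {e : E // s e = v}, Module.finrank F (M (t e.1)) := by
  set L : M v →ₗ[F] ∀ e : {e : E // s e = v}, M (t e.1) :=
    LinearMap.pi (fun e => (ρ e.1).comp (castLEquiv F M e.2.symm).toLinearMap) with hL
  have hbij : Function.Bijective L := by
    have h2 : ⇑L = fun (x : M v) (e : {e : E // s e = v}) =>
        ρ e.1 (cast (congrArg M e.2.symm) x) := by
      funext x e
      simp [hL, LinearMap.pi_apply, castLEquiv_apply]
    rw [h2]
    exact hI v hv
  have := (LinearEquiv.ofBijective L hbij).finrank_eq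
  rw [this, Module.finrank_pi_fintype]

/-- Cycles of the support subgraph of a finite-type representation satisfying (I) have no
exits: if `e` starts at a vertex of such a cycle but its target is not the next vertex of the
cycle, then `ρ(t(e)) = 0`. -/
theorem stmt1 (F : Type) [Field F] {V E : Type} (s t : E → V)
    (hrow : ∀ v : V, {e : E | s e = v}.Finite)
    (M : V → Type) [∀ v, AddCommGroup (M v)] [∀ v, Module F (M v)]
    [∀ v, FiniteDimensional F (M v)]
    (ρ : ∀ e : E, M (s e) →ₗ[F] M (t e))
    (hI : SatisfiesI F s t M ρ)
    (c : CycleData s t)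
    (hsupp : ∀ i, Nontrivial (M (c.ve i)))
    (i : ZMod c.n) (e : E)
    (hse : s e = c.ve i) (hte : t e ≠ c.ve (i + 1)) :
    Subsingleton (M (t e)) := by
  classical
  by_contra hsub
  have hnt : Nontrivial (M (t e)) := not_subsingleton_iff_nontrivial.mp hsub
  haveI : ∀ v, Fintype {e : E // s e = v} := fun v => (hrow v).fintype
  set d : ZMod c.n → ℕ := fun j => Module.finrank F (M (c.ve j)) with hd
  -- each vertex of the cycle is a non-sink
  have hdim : ∀ j : ZMod c.n,
      d j = ∑ f : {f : E // s f = c.ve j}, Module.finrank F (M (t f.1)) := fun j =>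
    dim_eq F s t M ρ hI (c.ve j) ⟨c.ed j, c.hs j⟩
  have hterm : ∀ j : ZMod c.n,
      Module.finrank F (M (t (c.ed j))) = d (j + 1) := by
    intro j; rw [hd]; simp only []; rw [c.ht j]
  have step : ∀ j : ZMod c.n, d (j + 1) ≤ d j := by
    intro j
    rw [hdim j, ← hterm j]
    exact Finset.single_le_sum (f := fun f : {f : E // s f = c.ve j} =>
      Module.finrank F (M (t f.1))) (fun _ _ => Nat.zero_le _)
      (Finset.mem_univ ⟨c.ed j, c.hs j⟩)
  have chain : ∀ (k : ℕ) (j : ZMod c.n), d (j + (k : ZMod c.n)) ≤ d j := by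
    intro k
    induction k with
    | zero => simp
    | succ k ih =>
      intro j
      have h1 : (j + ((k + 1 : ℕ) : ZMod c.n)) = (j + (k : ZMod c.n)) + 1 := by
        push_cast; ring
      rw [h1]
      exact le_trans (step (j + (k : ZMod c.n))) (ih j)
  -- strict inequality at i
  have hstrict : d (i + 1) + 1 ≤ d i := by
    have hne : (⟨c.ed i, c.hs i⟩ : {f : E // s f = c.ve i}) ≠ ⟨e, hse⟩ := by
      intro h
      apply hte
      rw [← c.ht i]
      congr 1
      exact (congrArg Subtype.val h).symm
    have hpos : 1 ≤ Module.finrank F (M (t e)) := Module.finrank_pos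
    rw [hdim i, ← Finset.add_sum_erase Finset.univ
        (fun f : {f : E // s f = c.ve i} => Module.finrank F (M (t f.1)))
        (Finset.mem_univ ⟨c.ed i, c.hs i⟩)]
    show d (i + 1) + 1 ≤ Module.finrank F (M (t (c.ed i))) +
        ∑ f ∈ Finset.univ.erase (⟨c.ed i, c.hs i⟩ : {f : E // s f = c.ve i}),
          Module.finrank F (M (t f.1))
    have hmem : (⟨e, hse⟩ : {f : E // s f = c.ve i}) ∈
        Finset.univ.erase ⟨c.ed i, c.hs i⟩ :=
      Finset.mem_erase.mpr ⟨fun h => hne h.symm, Finset.mem_univ _⟩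
    have h2 : Module.finrank F (M (t e)) ≤
        ∑ f ∈ Finset.univ.erase (⟨c.ed i, c.hs i⟩ : {f : E // s f = c.ve i}),
          Module.finrank F (M (t f.1)) :=
      Finset.single_le_sum (f := fun f : {f : E // s f = c.ve i} =>
        Module.finrank F (M (t f.1))) (fun _ _ => Nat.zero_le _) hmem
    have h3 := hterm i
    omega
  -- go around the cycle
  have hback : d i ≤ d (i + 1) := by
    have := chain (c.n - 1) (i + 1)
    have hcast : ((c.n - 1 : ℕ) : ZMod c.n) = -1 := by
      rw [Nat.cast_sub c.pos, ZMod.natCast_self]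
      push_cast
      ring
    rw [hcast] at this
    simpa using this
  omega
end

section
/- Let Γ be a row-finite digraph and let Γ' be a one-step reduction of Γ eliminating a loopless non-sink vertex v. Then the graph monoids S(Γ) and S(Γ') are isomorphic. -/
/-- Defining relations of the graph monoid: `[v] = ∑_{s(e)=v} [t(e)]` for every non-sink `v`
(the digraph is assumed row-finite, so the sum is finite). -/
def MonRel {V E : Type} (s t : E → V) : (V →₀ ℕ) → (V →₀ ℕ) → Prop :=
  fun x y => ∃ v : V, (∃ e, s e = v) ∧ x = Finsupp.single v 1 ∧
    y = ∑ᶠ e : {e : E // s e = v}, Finsupp.single (t e.1) 1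

/-- The graph monoid `S(Γ)`: the free commutative monoid on the vertices modulo the
congruence generated by the relations `v = ∑_{s(e)=v} t(e)`. -/
def GraphMonoid {V E : Type} (s t : E → V) : Type :=
  (addConGen (MonRel s t)).Quotient

noncomputable instance {V E : Type} (s t : E → V) : AddCommMonoid (GraphMonoid s t) :=
  AddCon.addCommMonoid _

/-- Vertices of the one-step reduction of `(V,E,s,t)` eliminating the vertex `v`. -/
def RedV {V : Type} (v : V) : Type := {w : V // w ≠ v}

/-- Arrows of the one-step reduction: the arrows of `Γ` not touching `v`, together with a new
arrow for each length-2 path through `v`. -/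
def RedE {V E : Type} (s t : E → V) (v : V) : Type :=
  {e : E // s e ≠ v ∧ t e ≠ v} ⊕ {p : E × E // t p.1 = v ∧ s p.2 = v}

/-- Source map of the one-step reduction (the eliminated vertex `v` is loopless). -/
def RedS {V E : Type} (s t : E → V) (v : V) (hl : ∀ e, ¬(s e = v ∧ t e = v)) :
    RedE s t v → RedV v
  | .inl e => ⟨s e.1, e.2.1⟩
  | .inr p => ⟨s p.1.1, fun h => hl p.1.1 ⟨h, p.2.1⟩⟩

/-- Target map of the one-step reduction. -/
def RedT {V E : Type} (s t : E → V) (v : V) (hl : ∀ e, ¬(s e = v ∧ t e = v)) :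
    RedE s t v → RedV v
  | .inl e => ⟨t e.1, e.2.2⟩
  | .inr p => ⟨t p.1.2, fun h => hl p.1.2 ⟨p.2.2, h⟩⟩

section Aux

variable {V E : Type} (s t : E → V) (v : V) (hl : ∀ e, ¬(s e = v ∧ t e = v))

open Classical in
/-- The function on all vertices induced by a function on reduced vertices. -/
noncomputable def Kfun {N : Type} [AddCommMonoid N] (k : RedV v → N) : V → N :=
  fun w => if h : w = v
    then ∑ᶠ g : {g : E // s g = v}, k ⟨t g.1, fun hh => hl g.1 ⟨g.2, hh⟩⟩
    else k ⟨w, h⟩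

/-- The fiber of `RedS` over `⟨w, hw⟩` splits into old edges and length-2 paths. -/
def fiberEquiv (w : V) (hw : w ≠ v) :
    {ε : RedE s t v // RedS s t v hl ε = ⟨w, hw⟩} ≃
      ({e : E // s e = w ∧ t e ≠ v} ⊕
        {p : E × E // (s p.1 = w ∧ t p.1 = v) ∧ s p.2 = v}) where
  toFun := fun ε => match ε with
    | ⟨.inl ⟨e, he⟩, h⟩ => .inl ⟨e, ⟨congrArg Subtype.val h, he.2⟩⟩
    | ⟨.inr ⟨p, hp⟩, h⟩ => .inr ⟨p, ⟨⟨congrArg Subtype.val h, hp.1⟩, hp.2⟩⟩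
  invFun := fun x => match x with
    | .inl ⟨e, he⟩ => ⟨.inl ⟨e, ⟨fun hh => hw (he.1.symm.trans hh), he.2⟩⟩,
        Subtype.ext he.1⟩
    | .inr ⟨p, hp⟩ => ⟨.inr ⟨p, ⟨hp.1.2, hp.2⟩⟩, Subtype.ext hp.1.1⟩
  left_inv := by rintro ⟨(⟨e, he⟩ | ⟨p, hp⟩), h⟩ <;> rfl
  right_inv := by rintro (⟨e, he⟩ | ⟨p, hp⟩) <;> rfl

variable (hrow : ∀ w : V, {e : E | s e = w}.Finite)
include hrow

noncomputable def fiberFintype (w : V) (hw : w ≠ v) :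
    Fintype {ε : RedE s t v // RedS s t v hl ε = ⟨w, hw⟩} := by
  haveI : Fintype {e : E // s e = w ∧ t e ≠ v} :=
    (Set.Finite.subset (hrow w) (fun e he => he.1)).fintype
  haveI : Fintype {e : E // s e = w ∧ t e = v} :=
    (Set.Finite.subset (hrow w) (fun e he => he.1)).fintype
  haveI : Fintype {g : E // s g = v} := (hrow v).fintype
  haveI : Fintype {p : E × E // (s p.1 = w ∧ t p.1 = v) ∧ s p.2 = v} :=
    Fintype.ofEquiv _ (Equiv.subtypeProdEquivProd
      (p := fun e => s e = w ∧ t e = v) (q := fun g => s g = v)).symm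
  exact Fintype.ofEquiv _ (fiberEquiv s t v hl w hw).symm

/-- Key combinatorial identity. -/
theorem key_sum {N : Type} [AddCommMonoid N] (k : RedV v → N) (w : V) (hw : w ≠ v) :
    ∑ᶠ ε : {ε : RedE s t v // RedS s t v hl ε = ⟨w, hw⟩}, k (RedT s t v hl ε.1)
      = ∑ᶠ e : {e : E // s e = w}, Kfun s t v hl k (t e.1) := by
  classical
  haveI instA : Fintype {e : E // s e = w ∧ t e ≠ v} :=
    (Set.Finite.subset (hrow w) (fun e he => he.1)).fintype
  haveI instB : Fintype {e : E // s e = w ∧ t e = v} :=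
    (Set.Finite.subset (hrow w) (fun e he => he.1)).fintype
  haveI instSv : Fintype {g : E // s g = v} := (hrow v).fintype
  haveI instP : Fintype {p : E × E // (s p.1 = w ∧ t p.1 = v) ∧ s p.2 = v} :=
    Fintype.ofEquiv _ (Equiv.subtypeProdEquivProd
      (p := fun e => s e = w ∧ t e = v) (q := fun g => s g = v)).symm
  haveI instSw : Fintype {e : E // s e = w} := (hrow w).fintype
  haveI instF : Fintype {ε : RedE s t v // RedS s t v hl ε = ⟨w, hw⟩} :=
    Fintype.ofEquiv _ (fiberEquiv s t v hl w hw).symm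
  rw [finsum_eq_sum_of_fintype, finsum_eq_sum_of_fintype]
  -- LHS
  rw [← Equiv.sum_comp (fiberEquiv s t v hl w hw).symm
    (fun ε => k (RedT s t v hl ε.1)), Fintype.sum_sum_type]
  -- RHS: split by whether the target is v
  rw [← Equiv.sum_comp (Equiv.sumCompl (fun x : {e : E // s e = w} => t x.1 = v))
    (fun e => Kfun s t v hl k (t e.1)), Fintype.sum_sum_type]
  have hA : ∑ a : {e : E // s e = w ∧ t e ≠ v},
      k (RedT s t v hl ((fiberEquiv s t v hl w hw).symm (.inl a)).1)
      = ∑ x : {x : {e : E // s e = w} // ¬ t x.1 = v},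
          Kfun s t v hl k (t ((Equiv.sumCompl _) (Sum.inr x)).1) := by
    refine Fintype.sum_equiv
      ((Equiv.subtypeSubtypeEquivSubtypeInter (fun e => s e = w)
        (fun e => ¬ t e = v)).symm) _ _ ?_
    rintro ⟨e, he⟩
    show k ⟨t e, he.2⟩ = Kfun s t v hl k (t e)
    rw [Kfun, dif_neg he.2]
  have hB : ∑ p : {p : E × E // (s p.1 = w ∧ t p.1 = v) ∧ s p.2 = v},
      k (RedT s t v hl ((fiberEquiv s t v hl w hw).symm (.inr p)).1)
      = ∑ x : {x : {e : E // s e = w} // t x.1 = v},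
          Kfun s t v hl k (t ((Equiv.sumCompl _) (Sum.inl x)).1) := by
    rw [← Equiv.sum_comp (Equiv.subtypeProdEquivProd
        (p := fun e => s e = w ∧ t e = v) (q := fun g => s g = v)).symm
      (fun p => k (RedT s t v hl ((fiberEquiv s t v hl w hw).symm (.inr p)).1)),
      Fintype.sum_prod_type]
    refine Fintype.sum_equiv
      ((Equiv.subtypeSubtypeEquivSubtypeInter (fun e => s e = w)
        (fun e => t e = v)).symm) _ _ ?_
    rintro ⟨e, he⟩
    show ∑ g : {g : E // s g = v}, k ⟨t g.1, _⟩ = Kfun s t v hl k (t e)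
    rw [Kfun, dif_pos he.2, finsum_eq_sum_of_fintype]
  rw [hA, hB]
  exact add_comm _ _

end Aux

section Main

variable {V E : Type} (s t : E → V)

/-- The class of a vertex generator in the graph monoid. -/
noncomputable def iotaV : V → GraphMonoid s t :=
  fun w => (addConGen (MonRel s t)).mk' (Finsupp.single w 1)

theorem rel_apply (w : V) [Fintype {e : E // s e = w}] (hns : ∃ e, s e = w) :
    (addConGen (MonRel s t)).mk' (Finsupp.single w 1)
      = ∑ᶠ e : {e : E // s e = w},
          (addConGen (MonRel s t)).mk' (Finsupp.single (t e.1) 1) := by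
  have h : MonRel s t (Finsupp.single w 1)
      (∑ᶠ e : {e : E // s e = w}, Finsupp.single (t e.1) 1) := ⟨w, hns, rfl, rfl⟩
  have h2 : (addConGen (MonRel s t)) (Finsupp.single w 1)
      (∑ᶠ e : {e : E // s e = w}, Finsupp.single (t e.1) 1) := AddConGen.Rel.of _ _ h
  have h3 := (AddCon.eq _).mpr h2
  calc (addConGen (MonRel s t)).mk' (Finsupp.single w 1)
      = (addConGen (MonRel s t)).mk'
          (∑ᶠ e : {e : E // s e = w}, Finsupp.single (t e.1) 1) := h3
    _ = _ := by
        rw [finsum_eq_sum_of_fintype, map_sum, ← finsum_eq_sum_of_fintype]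

variable (v : V) (hl : ∀ e, ¬(s e = v ∧ t e = v))

/-- Underlying `Finsupp`-level forward map. -/
noncomputable def Fzero : (V →₀ ℕ) →+
    GraphMonoid (RedS s t v hl) (RedT s t v hl) :=
  Finsupp.liftAddHom (fun w => multiplesHom _
    (Kfun s t v hl (iotaV (RedS s t v hl) (RedT s t v hl)) w))

/-- Underlying `Finsupp`-level backward map. -/
noncomputable def Gzero : (RedV v →₀ ℕ) →+ GraphMonoid s t :=
  Finsupp.liftAddHom (fun u => multiplesHom _ (iotaV s t u.1))

theorem redNonsink (w : V) (hw : w ≠ v) (hnsw : ∃ e, s e = w)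
    (hns : ∃ g, s g = v) : ∃ ε, RedS s t v hl ε = ⟨w, hw⟩ := by
  obtain ⟨e, he⟩ := hnsw
  by_cases hte : t e = v
  · obtain ⟨g, hg⟩ := hns
    exact ⟨.inr ⟨(e, g), ⟨hte, hg⟩⟩, Subtype.ext he⟩
  · exact ⟨.inl ⟨e, ⟨fun h => hw (he.symm.trans h), hte⟩⟩, Subtype.ext he⟩

theorem backNonsink (u : RedV v) (h : ∃ ε, RedS s t v hl ε = u) :
    ∃ e, s e = u.1 := by
  obtain ⟨ε, hε⟩ := h
  cases ε with
  | inl e => exact ⟨e.1, congrArg Subtype.val hε⟩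
  | inr p => exact ⟨p.1.1, congrArg Subtype.val hε⟩

variable (hrow : ∀ w : V, {e : E | s e = w}.Finite) (hns : ∃ e, s e = v)
include hrow hns

theorem Fzero_compat (x y : V →₀ ℕ) (h : MonRel s t x y) :
    Fzero s t v hl x = Fzero s t v hl y := by
  classical
  obtain ⟨w, hnsw, rfl, rfl⟩ := h
  haveI : Fintype {e : E // s e = w} := (hrow w).fintype
  have hx : Fzero s t v hl (Finsupp.single w 1)
      = Kfun s t v hl (iotaV (RedS s t v hl) (RedT s t v hl)) w := by
    simp [Fzero, Finsupp.liftAddHom_apply_single, multiplesHom_apply]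
  have hy : Fzero s t v hl (∑ᶠ e : {e : E // s e = w}, Finsupp.single (t e.1) 1)
      = ∑ e : {e : E // s e = w},
          Kfun s t v hl (iotaV (RedS s t v hl) (RedT s t v hl)) (t e.1) := by
    rw [finsum_eq_sum_of_fintype, map_sum]
    simp [Fzero, Finsupp.liftAddHom_apply_single, multiplesHom_apply]
  rw [hx, hy]
  by_cases hwv : w = v
  · subst hwv
    rw [Kfun, dif_pos rfl, finsum_eq_sum_of_fintype]
    refine Finset.sum_congr rfl fun g _ => ?_
    rw [Kfun, dif_neg (fun hh => hl g.1 ⟨g.2, hh⟩)]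
  · rw [← finsum_eq_sum_of_fintype,
      ← key_sum s t v hl hrow (iotaV (RedS s t v hl) (RedT s t v hl)) w hwv,
      Kfun, dif_neg hwv]
    haveI := fiberFintype s t v hl hrow w hwv
    exact rel_apply (RedS s t v hl) (RedT s t v hl) ⟨w, hwv⟩
      (redNonsink s t v hl w hwv hnsw hns)

theorem Kfun_iota_eq :
    Kfun s t v hl (fun u : RedV v => iotaV s t u.1) = iotaV s t := by
  classical
  funext x
  by_cases hx : x = v
  · rw [Kfun, dif_pos hx]
    haveI : Fintype {g : E // s g = v} := (hrow v).fintype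
    rw [hx]
    exact (rel_apply s t v hns).symm
  · rw [Kfun, dif_neg hx]

theorem Gzero_compat (x y : RedV v →₀ ℕ)
    (h : MonRel (RedS s t v hl) (RedT s t v hl) x y) :
    Gzero s t v x = Gzero s t v y := by
  classical
  obtain ⟨u, hnsu, rfl, rfl⟩ := h
  obtain ⟨w, hw⟩ := u
  haveI : Fintype {e : E // s e = w} := (hrow w).fintype
  haveI := fiberFintype s t v hl hrow w hw
  have hx : Gzero s t v (Finsupp.single (⟨w, hw⟩ : RedV v) 1) = iotaV s t w := by
    rw [Gzero]
    exact (Finsupp.liftAddHom_apply_single _ _ _).trans (one_nsmul (iotaV s t w))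
  have hy : Gzero s t v
      (∑ᶠ ε : {ε : RedE s t v // RedS s t v hl ε = ⟨w, hw⟩},
        Finsupp.single (RedT s t v hl ε.1) 1)
      = ∑ᶠ ε : {ε : RedE s t v // RedS s t v hl ε = ⟨w, hw⟩},
          iotaV s t ((RedT s t v hl ε.1)).1 := by
    rw [finsum_eq_sum_of_fintype, map_sum, ← finsum_eq_sum_of_fintype]
    simp [Gzero, Finsupp.liftAddHom_apply_single, multiplesHom_apply]
  rw [hx, hy]
  have hkey := key_sum s t v hl hrow (fun u : RedV v => iotaV s t u.1) w hw
  calc iotaV s t w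
      = ∑ᶠ e : {e : E // s e = w}, iotaV s t (t e.1) :=
        rel_apply s t w (backNonsink s t v hl ⟨w, hw⟩ hnsu)
    _ = ∑ᶠ e : {e : E // s e = w},
          Kfun s t v hl (fun u : RedV v => iotaV s t u.1) (t e.1) := by
        rw [Kfun_iota_eq s t v hl hrow hns]
    _ = _ := hkey.symm

end Main

section Homs

variable {V E : Type} (s t : E → V) (v : V) (hl : ∀ e, ¬(s e = v ∧ t e = v))
  (hrow : ∀ w : V, {e : E | s e = w}.Finite) (hns : ∃ e, s e = v)

/-- The forward monoid homomorphism. -/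
noncomputable def Fhom : GraphMonoid s t →+ GraphMonoid (RedS s t v hl) (RedT s t v hl) :=
  AddCon.lift _ (Fzero s t v hl) (AddCon.addConGen_le.mpr fun x y h =>
    (AddCon.ker_rel _).mpr (Fzero_compat s t v hl hrow hns x y h))

/-- The backward monoid homomorphism. -/
noncomputable def Ghom : GraphMonoid (RedS s t v hl) (RedT s t v hl) →+ GraphMonoid s t :=
  AddCon.lift _ (Gzero s t v) (AddCon.addConGen_le.mpr fun x y h =>
    (AddCon.ker_rel _).mpr (Gzero_compat s t v hl hrow hns x y h))

theorem Ghom_iota (u : RedV v) :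
    Ghom s t v hl hrow hns (iotaV (RedS s t v hl) (RedT s t v hl) u)
      = iotaV s t u.1 := by
  show (AddCon.lift _ _ _) ((addConGen _).mk' _) = _
  rw [AddCon.lift_mk']
  simp [Gzero, iotaV, Finsupp.liftAddHom_apply_single, multiplesHom_apply]
  exact one_nsmul _

theorem Fhom_iota (w : V) :
    Fhom s t v hl hrow hns (iotaV s t w)
      = Kfun s t v hl (iotaV (RedS s t v hl) (RedT s t v hl)) w := by
  show (AddCon.lift _ _ _) ((addConGen _).mk' _) = _
  rw [AddCon.lift_mk']
  simp [Fzero, Finsupp.liftAddHom_apply_single, multiplesHom_apply]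

theorem Ghom_K (a : V) :
    Ghom s t v hl hrow hns (Kfun s t v hl (iotaV (RedS s t v hl) (RedT s t v hl)) a)
      = iotaV s t a := by
  classical
  by_cases ha : a = v
  · rw [Kfun, dif_pos ha]
    haveI : Fintype {g : E // s g = v} := (hrow v).fintype
    rw [finsum_eq_sum_of_fintype, map_sum]
    have h1 : ∀ g : {g : E // s g = v},
        Ghom s t v hl hrow hns (iotaV (RedS s t v hl) (RedT s t v hl)
          ⟨t g.1, fun hh => hl g.1 ⟨g.2, hh⟩⟩) = iotaV s t (t g.1) :=
      fun g => Ghom_iota s t v hl hrow hns _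
    rw [Finset.sum_congr rfl fun g _ => h1 g, ← finsum_eq_sum_of_fintype, ha]
    exact (rel_apply s t v hns).symm
  · rw [Kfun, dif_neg ha]
    exact Ghom_iota s t v hl hrow hns ⟨a, ha⟩

theorem left_inv_hom (x : GraphMonoid s t) :
    Ghom s t v hl hrow hns (Fhom s t v hl hrow hns x) = x := by
  refine AddCon.induction_on x fun f => ?_
  show Ghom s t v hl hrow hns (Fhom s t v hl hrow hns
    ((addConGen (MonRel s t)).mk' f)) = (addConGen (MonRel s t)).mk' f
  refine Finsupp.induction f ?_ ?_
  · simp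
    exact (congrArg (Ghom s t v hl hrow hns) (map_zero (Fhom s t v hl hrow hns))).trans (map_zero _)
  · intro a b g _ _ ih
    erw [map_add, map_add, map_add, ih]
    congr 1
    have hb : (Finsupp.single a b : V →₀ ℕ) = b • Finsupp.single a 1 := by
      rw [Finsupp.smul_single, smul_eq_mul, mul_one]
    erw [hb, map_nsmul, map_nsmul, map_nsmul]
    congr 1
    rw [show (addConGen (MonRel s t)).mk' (Finsupp.single a 1) = iotaV s t a from rfl,
      Fhom_iota, Ghom_K]

theorem right_inv_hom (y : GraphMonoid (RedS s t v hl) (RedT s t v hl)) :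
    Fhom s t v hl hrow hns (Ghom s t v hl hrow hns y) = y := by
  refine AddCon.induction_on y fun f => ?_
  show Fhom s t v hl hrow hns (Ghom s t v hl hrow hns
    ((addConGen (MonRel (RedS s t v hl) (RedT s t v hl))).mk' f))
    = (addConGen (MonRel (RedS s t v hl) (RedT s t v hl))).mk' f
  refine Finsupp.induction f ?_ ?_
  · simp
    exact (congrArg (Fhom s t v hl hrow hns) (map_zero (Ghom s t v hl hrow hns))).trans (map_zero _)
  · intro u b g _ _ ih
    erw [map_add, map_add, map_add, ih]
    congr 1
    have hb : (Finsupp.single u b : RedV v →₀ ℕ) = b • Finsupp.single u 1 := by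
      rw [Finsupp.smul_single, smul_eq_mul, mul_one]
    erw [hb, map_nsmul, map_nsmul, map_nsmul]
    congr 1
    rw [show (addConGen (MonRel (RedS s t v hl) (RedT s t v hl))).mk'
        (Finsupp.single u 1) = iotaV (RedS s t v hl) (RedT s t v hl) u from rfl,
      Ghom_iota, Fhom_iota, Kfun, dif_neg u.2]
    rfl

end Homs

/-- If `Γ'` is a one-step reduction of a row-finite digraph `Γ` eliminating a loopless
non-sink `v`, then `S(Γ) ≅ S(Γ')`. -/
theorem stmt8 {V E : Type} (s t : E → V)
    (hrow : ∀ w : V, {e : E | s e = w}.Finite)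
    (v : V) (hl : ∀ e, ¬(s e = v ∧ t e = v)) (hns : ∃ e, s e = v) :
    Nonempty (GraphMonoid s t ≃+ GraphMonoid (RedS s t v hl) (RedT s t v hl)) := by
  exact ⟨AddMonoidHom.toAddEquiv (Fhom s t v hl hrow hns) (Ghom s t v hl hrow hns)
    (AddMonoidHom.ext (left_inv_hom s t v hl hrow hns))
    (AddMonoidHom.ext (right_inv_hom s t v hl hrow hns))⟩
end

section
/- Let Γ be a reduced digraph (every vertex is a sink or has a loop at it) and let d: V → ℕ be a dimension function. Then every vertex v with d(v) > 0 is either an isolated vertex or a pseudo-source. -/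
/-- A dimension function on a row-finite digraph `(V, E, s, t)`:
`d v = ∑_{s(e)=v} d(t(e))` for every non-sink `v`. -/
def IsDimFun {V E : Type} (s t : E → V) (d : V → ℕ) : Prop :=
  ∀ v : V, (∃ e, s e = v) → d v = ∑ᶠ e : {e : E // s e = v}, d (t e.1)

/-- An isolated vertex: no outgoing and no incoming arrows. -/
def IsIsolated {V E : Type} (s t : E → V) (v : V) : Prop :=
  (¬ ∃ e, s e = v) ∧ (¬ ∃ e, t e = v)

/-- A pseudo-source: the incoming arrows consist of exactly one arrow, which is a loop. -/
def IsPseudoSource {V E : Type} (s t : E → V) (v : V) : Prop :=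
  ∃ e, s e = v ∧ t e = v ∧ ∀ f, t f = v → f = e

/-- A reduced digraph: every vertex is a sink or has a loop at it. -/
def IsReducedDigraph {V E : Type} (s t : E → V) : Prop :=
  ∀ v : V, (¬ ∃ e, s e = v) ∨ (∃ e, s e = v ∧ t e = v)

lemma key9 {V E : Type} (s t : E → V)
    (hrow : ∀ v : V, {e : E | s e = v}.Finite)
    (d : V → ℕ) (hd : IsDimFun s t d)
    (w : V) (e f : E) (he : s e = w) (hte : t e = w)
    (hf : s f = w) (hne : f ≠ e) : d (t f) = 0 := by
  have hdim := hd w ⟨e, he⟩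
  haveI : Fintype {e : E // s e = w} := (hrow w).fintype
  haveI : DecidableEq {e : E // s e = w} := Classical.decEq _
  rw [finsum_eq_sum_of_fintype] at hdim
  set a : {e : E // s e = w} := ⟨e, he⟩
  set b : {e : E // s e = w} := ⟨f, hf⟩
  have hab : a ≠ b := by
    intro h
    exact hne (congrArg Subtype.val h.symm)
  have hsub : ({a, b} : Finset {e : E // s e = w}) ⊆ Finset.univ :=
    Finset.subset_univ _
  have hle : ∑ x ∈ ({a, b} : Finset _), d (t x.1) ≤
      ∑ x : {e : E // s e = w}, d (t x.1) :=
    Finset.sum_le_sum_of_subset hsub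
  rw [Finset.sum_pair hab] at hle
  have : d (t e) + d (t f) ≤ d w := by rw [hdim]; exact hle
  rw [hte] at this
  omega

theorem stmt9 {V E : Type} (s t : E → V)
    (hrow : ∀ v : V, {e : E | s e = v}.Finite)
    (hred : IsReducedDigraph s t)
    (d : V → ℕ) (hd : IsDimFun s t d)
    (v : V) (hv : 0 < d v) :
    IsIsolated s t v ∨ IsPseudoSource s t v := by
  by_cases hout : ∃ e, s e = v
  · -- v has an out-edge, so by reducedness a loop e at v
    obtain ⟨e, he, hte⟩ := (hred v).resolve_left (by simpa using hout)
    right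
    refine ⟨e, he, hte, ?_⟩
    intro f hf
    by_contra hne
    -- consider w = s f; it has an out-edge f, hence a loop e'
    obtain ⟨e', he', hte'⟩ := (hred (s f)).resolve_left (not_not_intro ⟨f, rfl⟩)
    by_cases hfe' : f = e'
    · -- then f is a loop at s f, so s f = t f = v
      have hsf : s f = v := by rw [← hf, hfe', hte']; exact he'
      have := key9 s t hrow d hd v e f he hte hsf hne
      rw [hf] at this; omega
    · have := key9 s t hrow d hd (s f) e' f he' hte' rfl hfe'
      rw [hf] at this; omega
  · -- v is a sink; show it has no incoming edge either
    left
    refine ⟨hout, ?_⟩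
    rintro ⟨f, hf⟩
    obtain ⟨e', he', hte'⟩ := (hred (s f)).resolve_left (not_not_intro ⟨f, rfl⟩)
    by_cases hfe' : f = e'
    · have hsf : s f = v := by rw [← hf, hfe', hte']; exact he'
      exact hout ⟨f, hsf⟩
    · have := key9 s t hrow d hd (s f) e' f he' hte' rfl hfe'
      rw [hf] at this; omega
end

section
/- Let Γ be a finite digraph. The monoid of dimension functions on Γ (under pointwise addition) is a free commutative monoid whose rank equals the number of maximal sinks plus the number of maximal cycles of Γ. -/
/-- One-step reachability: there is an arrow from `a` to `b`. -/
def Step {V E : Type} (s t : E → V) (a b : V) : Prop := ∃ e, s e = a ∧ t e = b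

/-- Reachability: there is a (possibly empty) directed path from `a` to `b`. -/
def Reach {V E : Type} (s t : E → V) : V → V → Prop := Relation.ReflTransGen (Step s t)

/-- A sink. -/
def IsSink {V E : Type} (s t : E → V) (v : V) : Prop := ¬ ∃ e, s e = v

/-- A maximal sink: a sink to which no cycle connects. -/
def IsMaxSink {V E : Type} (s t : E → V) (v : V) : Prop :=
  IsSink s t v ∧ ∀ c : CycleData s t, ∀ i, ¬ Reach s t (c.ve i) v

/-- A maximal cycle: any cycle connecting to it is itself
(cycles are identified with their sets of arrows, i.e. up to rotation). -/
def IsMaxCycle {V E : Type} (s t : E → V) (c : CycleData s t) : Prop :=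
  ∀ c' : CycleData s t, (∃ i j, Reach s t (c'.ve i) (c.ve j)) →
    Set.range c'.ed = Set.range c.ed


section Walks

variable {V E : Type} (s t : E → V)

/-- Walk predicate: `IsWalk s t v l w` iff the edges in `l` form a path from `v` to `w`. -/
def IsWalk : V → List E → V → Prop
  | v, [], w => v = w
  | v, e :: l, w => s e = v ∧ IsWalk (t e) l w

/-- vertex at position `k` of the walk `(v, l)`. -/
def wv (t : E → V) : V → List E → ℕ → V
  | v, _, 0 => v
  | v, [], _ + 1 => v
  | _, e :: l, k + 1 => wv t (t e) l k

variable {s t}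

@[simp] lemma isWalk_nil {v w : V} : IsWalk s t v [] w ↔ v = w := Iff.rfl

@[simp] lemma isWalk_cons {v w : V} {e : E} {l : List E} :
    IsWalk s t v (e :: l) w ↔ s e = v ∧ IsWalk s t (t e) l w := Iff.rfl

@[simp] lemma wv_zero {v : V} {l : List E} : wv t v l 0 = v := by cases l <;> rfl

@[simp] lemma wv_nil {v : V} {k : ℕ} : wv t v ([] : List E) k = v := by cases k <;> rfl

@[simp] lemma wv_cons_succ {v : V} {e : E} {l : List E} {k : ℕ} :
    wv t v (e :: l) (k + 1) = wv t (t e) l k := rfl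

lemma isWalk_append {v w : V} {l₁ l₂ : List E} :
    IsWalk s t v (l₁ ++ l₂) w ↔ ∃ u, IsWalk s t v l₁ u ∧ IsWalk s t u l₂ w := by
  induction l₁ generalizing v with
  | nil => simp
  | cons e l ih => simp [ih, and_assoc]

lemma walk_det {v a b : V} {l : List E} (ha : IsWalk s t v l a) (hb : IsWalk s t v l b) :
    a = b := by
  induction l generalizing v with
  | nil => exact ha.symm.trans hb
  | cons e l ih => exact ih ha.2 hb.2

lemma wv_last {v w : V} {l : List E} (h : IsWalk s t v l w) {k : ℕ} (hk : l.length ≤ k) :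
    wv t v l k = w := by
  induction l generalizing v k with
  | nil => simp_all
  | cons e l ih =>
    cases k with
    | zero => simp at hk
    | succ k => simpa using ih h.2 (by simpa using hk)

lemma walk_take {v w : V} {l : List E} (h : IsWalk s t v l w) (k : ℕ) :
    IsWalk s t v (l.take k) (wv t v l k) := by
  induction l generalizing v k with
  | nil => simp
  | cons e l ih =>
    cases k with
    | zero => simp
    | succ k => exact ⟨h.1, by simpa using ih h.2 k⟩

lemma walk_drop {v w : V} {l : List E} (h : IsWalk s t v l w) (k : ℕ) :
    IsWalk s t (wv t v l k) (l.drop k) w := by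
  induction l generalizing v k with
  | nil => simpa using h
  | cons e l ih =>
    cases k with
    | zero => simpa using h
    | succ k => simpa using ih h.2 k

lemma wv_take {v w : V} {l : List E} (h : IsWalk s t v l w) {i j : ℕ} (hij : i ≤ j) :
    wv t v (l.take j) i = wv t v l i := by
  have h1 := walk_take (walk_take h j) i
  rw [List.take_take, min_eq_left hij] at h1
  exact walk_det h1 (walk_take h i)

lemma walk_s_get {v w : V} {l : List E} (h : IsWalk s t v l w) {k : ℕ} (hk : k < l.length)
    (e₀ : E) : s (l.getD k e₀) = wv t v l k := by
  induction l generalizing v k with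
  | nil => simp at hk
  | cons e l ih =>
    cases k with
    | zero => simpa using h.1
    | succ k => simpa using ih h.2 (by simpa using hk) 

lemma walk_t_get {v w : V} {l : List E} (h : IsWalk s t v l w) {k : ℕ} (hk : k < l.length)
    (e₀ : E) : t (l.getD k e₀) = wv t v l (k + 1) := by
  induction l generalizing v k with
  | nil => simp at hk
  | cons e l ih =>
    cases k with
    | zero =>
      cases l with
      | nil => simpa using wv_last h.2 (by simp)
      | cons f m => rfl
    | succ k => simpa using ih h.2 (by simpa using hk)

lemma reach_iff_walk {v w : V} : Reach s t v w ↔ ∃ l, IsWalk s t v l w := by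
  constructor
  · intro h
    induction h with
    | refl => exact ⟨[], rfl⟩
    | tail _ hstep ih =>
      obtain ⟨l, hl⟩ := ih
      obtain ⟨e, he1, he2⟩ := hstep
      refine ⟨l ++ [e], isWalk_append.2 ⟨_, hl, he1, he2⟩⟩
  · rintro ⟨l, hl⟩
    induction l generalizing v with
    | nil => exact hl ▸ Relation.ReflTransGen.refl
    | cons e l ih =>
      exact Relation.ReflTransGen.head ⟨e, hl.1, rfl⟩ (ih hl.2)

lemma walk_reach {v w : V} {l : List E} (h : IsWalk s t v l w) : Reach s t v w :=
  reach_iff_walk.2 ⟨l, h⟩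

lemma reach_wv {v w : V} {l : List E} (h : IsWalk s t v l w) (k : ℕ) :
    Reach s t v (wv t v l k) ∧ Reach s t (wv t v l k) w :=
  ⟨walk_reach (walk_take h k), walk_reach (walk_drop h k)⟩

end Walks

section Cycles

variable {V E : Type} {s t : E → V}

lemma cycle_reach (c : CycleData s t) (i j : ZMod c.n) : Reach s t (c.ve i) (c.ve j) := by
  haveI : NeZero c.n := ⟨c.pos.ne'⟩
  have key : ∀ k : ℕ, Reach s t (c.ve i) (c.ve (i + (k : ZMod c.n))) := by
    intro k
    induction k with
    | zero => simp; exact Relation.ReflTransGen.refl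
    | succ k ih =>
      refine Relation.ReflTransGen.tail ih ⟨c.ed (i + (k : ZMod c.n)), c.hs _, ?_⟩
      rw [c.ht]
      push_cast
      ring_nf
  have := key (j - i).val
  rwa [ZMod.natCast_zmod_val, add_sub_cancel] at this

lemma cycle_vertexset (c : CycleData s t) : Set.range c.ve = s '' Set.range c.ed := by
  ext x
  constructor
  · rintro ⟨i, rfl⟩; exact ⟨c.ed i, ⟨i, rfl⟩, c.hs i⟩
  · rintro ⟨e, ⟨i, rfl⟩, rfl⟩; exact ⟨i, (c.hs i).symm⟩

lemma cycle_nonsink (c : CycleData s t) (i : ZMod c.n) : ∃ e, s e = c.ve i :=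
  ⟨c.ed i, c.hs i⟩

/-- If the edge set of `c'` is contained in that of `c`, they are equal. -/
lemma edge_subset_eq (c c' : CycleData s t) (h : Set.range c'.ed ⊆ Set.range c.ed) :
    Set.range c'.ed = Set.range c.ed := by
  haveI : NeZero c.n := ⟨c.pos.ne'⟩
  haveI : NeZero c'.n := ⟨c'.pos.ne'⟩
  obtain ⟨m₀, hm₀⟩ := h ⟨0, rfl⟩
  have key : ∀ k : ℕ, c'.ed (k : ZMod c'.n) = c.ed (m₀ + (k : ZMod c.n)) := by
    intro k
    induction k with
    | zero => simpa using hm₀.symm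
    | succ k ih =>
      obtain ⟨r, hr⟩ := h ⟨(k + 1 : ℕ), rfl⟩
      have h1 : s (c.ed r) = c.ve r := c.hs r
      have h2 : s (c'.ed ((k + 1 : ℕ) : ZMod c'.n)) = c'.ve ((k + 1 : ℕ) : ZMod c'.n) :=
        c'.hs _
      have h3 : c'.ve ((k + 1 : ℕ) : ZMod c'.n) = t (c'.ed (k : ZMod c'.n)) := by
        rw [c'.ht]; push_cast; ring_nf
    
      have h4 : t (c'.ed (k : ZMod c'.n)) = c.ve (m₀ + (k : ZMod c.n) + 1) := by
        rw [ih, c.ht]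
      have : c.ve r = c.ve (m₀ + (k : ZMod c.n) + 1) := by
        rw [← c.hs r, hr, h2, h3, h4]
      have hreq := c.inj this
      rw [← hr, hreq]
      congr 1
      push_cast
      ring
  apply le_antisymm h
  rintro e ⟨i, rfl⟩
  refine ⟨((i - m₀).val : ZMod c'.n), ?_⟩
  rw [key]
  congr 1
  rw [ZMod.natCast_zmod_val]
  ring

/-- Build a cycle from a closed walk with pairwise distinct vertices. -/
noncomputable def mkCycle (x : V) (e : E) (l : List E) (h : IsWalk s t x (e :: l) x)
    (hnd : ∀ i j, i < (e :: l).length → j < (e :: l).length →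
      wv t x (e :: l) i = wv t x (e :: l) j → i = j) : CycleData s t := by
  classical
  set m : List E := e :: l with hm
  haveI : NeZero m.length := ⟨by simp [hm]⟩
  exact
  { n := m.length
    pos := by simp [hm]
    ve := fun i => wv t x m i.val
    ed := fun i => m.getD i.val e
    inj := by
      intro i j hij
      have := hnd i.val j.val (ZMod.val_lt i) (ZMod.val_lt j) hij
      have h1 : ((i.val : ℕ) : ZMod m.length) = ((j.val : ℕ) : ZMod m.length) := by rw [this]
      rwa [ZMod.natCast_zmod_val, ZMod.natCast_zmod_val] at h1
    hs := fun i => walk_s_get h (ZMod.val_lt i) e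
    ht := by
      intro i
      rw [walk_t_get h (ZMod.val_lt i) e]
      show wv t x m (i.val + 1) = wv t x m (i + 1).val
      rcases Nat.lt_or_ge (i.val + 1) m.length with h1 | h1
      · have : (i + 1).val = i.val + 1 := by
          conv_lhs => rw [← ZMod.natCast_zmod_val i]
          rw [show ((i.val : ℕ) : ZMod m.length) + 1 = ((i.val + 1 : ℕ) : ZMod m.length) by
            push_cast; ring]
          exact ZMod.val_cast_of_lt h1
        rw [this]
      · have h2 : i.val + 1 = m.length := by have := ZMod.val_lt i; omega
        have h3 : (i + 1).val = 0 := by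
          conv_lhs => rw [← ZMod.natCast_zmod_val i]
          rw [show ((i.val : ℕ) : ZMod m.length) + 1 = ((i.val + 1 : ℕ) : ZMod m.length) by
            push_cast; ring, h2]
          simp
        rw [h3, wv_zero, wv_last h h2.ge] }

@[simp] lemma mkCycle_ve_zero (x : V) (e : E) (l : List E) (h : IsWalk s t x (e :: l) x) (hnd) :
    (mkCycle x e l h hnd).ve 0 = x := by
  simp [mkCycle]
  rfl

@[simp] lemma mkCycle_ed_zero (x : V) (e : E) (l : List E) (h : IsWalk s t x (e :: l) x) (hnd) :
    (mkCycle x e l h hnd).ed 0 = e := by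
  simp [mkCycle]
  rfl

/-- Cycle extraction: a nonempty closed walk yields a cycle based at the same vertex
whose first edge is the first edge of the walk. -/
lemma exists_cycle_of_closed_walk {x : V} {e : E} {l : List E} (h : IsWalk s t x (e :: l) x) :
    ∃ c : CycleData s t, c.ve 0 = x ∧ c.ed 0 = e := by
  classical
  have hex : ∃ n, ∃ l' : List E, IsWalk s t x (e :: l') x ∧ l'.length = n := ⟨_, l, h, rfl⟩
  set n₀ := Nat.find hex with hn₀
  obtain ⟨l', hl', hlen⟩ := Nat.find_spec hex
  have hmin : ∀ k < n₀, ¬ ∃ l'' : List E, IsWalk s t x (e :: l'') x ∧ l''.length = k :=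
    fun k hk => Nat.find_min hex hk
  have hnd : ∀ i j, i < (e :: l').length → j < (e :: l').length →
      wv t x (e :: l') i = wv t x (e :: l') j → i = j := by
    intro i j hi hj heq
    by_contra hne
    -- wlog i < j
    wlog hij : i < j generalizing i j
    · exact this j i hj hi heq.symm (Ne.symm hne) (by omega)
    set m : List E := e :: l' with hm
    rcases Nat.eq_zero_or_pos i with rfl | hpos
    · -- prefix take j is a shorter closed walk at x
      have hw : IsWalk s t x (m.take j) x := by
        have := walk_take hl' j
        rwa [← heq, wv_zero] at this
      have hj1 : 1 ≤ j := by omega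
      have htj : m.take j = e :: l'.take (j - 1) := by
        cases j with
        | zero => omega
        | succ j => simp [hm]
      rw [htj] at hw
      exact hmin (j - 1) (by simp [hm] at hj; omega) ⟨_, hw, by simp [hm] at hj ⊢; omega⟩
    · -- cut out middle part
      have hw1 : IsWalk s t x (m.take i) (wv t x m i) := walk_take hl' i
      have hw2 : IsWalk s t (wv t x m j) (m.drop j) x := walk_drop hl' j
      have hw : IsWalk s t x (m.take i ++ m.drop j) x :=
        isWalk_append.2 ⟨_, hw1, heq ▸ hw2⟩
      have hti : m.take i = e :: l'.take (i - 1) := by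
        cases i with
        | zero => omega
        | succ i => simp [hm]
      rw [hti] at hw
      refine hmin ((l'.take (i-1) ++ m.drop j).length) ?_ ⟨_, hw, rfl⟩
      simp only [List.length_append, List.length_take, List.length_drop, hm,
        List.length_cons] at hj ⊢
      omega
  exact ⟨mkCycle x e l' hl' hnd, by simp⟩

end Cycles

section DimLemmas

variable {V E : Type} {s t : E → V} [Fintype V] [Fintype E] [DecidableEq V] {d : V → ℕ}

open Finset

lemma dim_sum (hd : IsDimFun s t d) {v : V} (hv : ∃ e, s e = v) :
    d v = ∑ e : {e : E // s e = v}, d (t e.1) := by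
  classical
  rw [hd v hv, finsum_eq_sum_of_fintype]

lemma step_le (hd : IsDimFun s t d) {e : E} : d (t e) ≤ d (s e) := by
  classical
  rw [dim_sum hd ⟨e, rfl⟩]
  exact Finset.single_le_sum (f := fun e' : {e' : E // s e' = s e} => d (t e'.1))
    (fun _ _ => Nat.zero_le _) (Finset.mem_univ ⟨e, rfl⟩)

lemma two_step_le (hd : IsDimFun s t d) {e₁ e₂ : E} (hne : e₁ ≠ e₂)
    (heq : s e₁ = s e₂) : d (t e₁) + d (t e₂) ≤ d (s e₁) := by
  classical
  rw [dim_sum hd ⟨e₁, rfl⟩]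
  have h : ({⟨e₁, rfl⟩, ⟨e₂, heq.symm⟩} : Finset {e : E // s e = s e₁}) ⊆ Finset.univ :=
    Finset.subset_univ _
  calc d (t e₁) + d (t e₂)
      = ∑ e ∈ ({⟨e₁, rfl⟩, ⟨e₂, heq.symm⟩} : Finset {e : E // s e = s e₁}), d (t e.1) := by
        rw [Finset.sum_pair (by simpa using hne)]
    _ ≤ _ := Finset.sum_le_sum_of_subset h

lemma reach_mono (hd : IsDimFun s t d) {a b : V} (h : Reach s t a b) : d b ≤ d a := by
  induction h with
  | refl => exact le_rfl
  | tail _ hstep ih =>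
    obtain ⟨e, he1, he2⟩ := hstep
    exact le_trans (he1 ▸ he2 ▸ step_le hd) ih

lemma cycle_const (hd : IsDimFun s t d) (c : CycleData s t) (i j : ZMod c.n) :
    d (c.ve i) = d (c.ve j) :=
  le_antisymm (reach_mono hd (cycle_reach c j i)) (reach_mono hd (cycle_reach c i j))

/-- Forced edge lemma: an out-edge of a cycle vertex which is not the cycle edge
has target of dimension zero. -/
lemma forced_edge (hd : IsDimFun s t d) (c : CycleData s t) {m : ZMod c.n} {e : E}
    (hse : s e = c.ve m) (hne : e ≠ c.ed m) : d (t e) = 0 := by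
  have h1 : d (t (c.ed m)) = d (c.ve m) := by rw [c.ht]; exact cycle_const hd c _ _
  have h2 := two_step_le hd (Ne.symm hne) (by rw [hse, c.hs])
  rw [c.hs, h1] at h2
  omega

end DimLemmas

section WF

variable {V E : Type} {s t : E → V}

lemma transGen_closed_walk {P : V → Prop} {x y : V}
    (h : Relation.TransGen (fun a b => Step s t b a ∧ P a ∧ P b) x y) :
    ∃ e l, IsWalk s t y (e :: l) x ∧ P x ∧ P y := by
  induction h with
  | single h =>
    obtain ⟨⟨e, he1, he2⟩, hPx, hPy⟩ := h
    exact ⟨e, [], ⟨he1, he2⟩, hPx, hPy⟩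
  | tail _ hr ih =>
    obtain ⟨⟨e, he1, he2⟩, hPb, hPy⟩ := hr
    obtain ⟨e', l', hw, hPx, _⟩ := ih
    exact ⟨e, e' :: l', ⟨he1, by rw [he2]; exact hw⟩, hPx, hPy⟩

lemma wf_of_no_cycle [Finite V] {P : V → Prop}
    (hP : ∀ v, P v → ∀ c : CycleData s t, c.ve 0 = v → False) :
    WellFounded (fun a b => Step s t b a ∧ P a ∧ P b) := by
  set r := fun a b => Step s t b a ∧ P a ∧ P b with hr
  have hirr : ∀ v, ¬ Relation.TransGen r v v := by
    intro v hv
    obtain ⟨e, l, hw, hPv, _⟩ := transGen_closed_walk hv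
    obtain ⟨c, hc0, _⟩ := exists_cycle_of_closed_walk hw
    exact hP v hPv c hc0
  haveI : IsTrans V (Relation.TransGen r) := inferInstance
  haveI : IsIrrefl V (Relation.TransGen r) := ⟨hirr⟩
  exact Subrelation.wf (fun h => Relation.TransGen.single h)
    (Finite.wellFounded_of_trans_of_irrefl (Relation.TransGen r))

end WF

section Mutual

variable {V E : Type} {s t : E → V} [Fintype V] [Fintype E] [DecidableEq V] {d : V → ℕ}

/-- Two mutually-reaching cycles with different edge sets force dimension zero. -/
lemma mutual_cycles_dzero (hd : IsDimFun s t d) (c c' : CycleData s t)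
    (h1 : ∃ i j, Reach s t (c.ve i) (c'.ve j))
    (h2 : ∃ i j, Reach s t (c'.ve i) (c.ve j))
    (hne : Set.range c'.ed ≠ Set.range c.ed) : d (c.ve 0) = 0 := by
  haveI : NeZero c'.n := ⟨c'.pos.ne'⟩
  by_contra hK
  set K := d (c.ve 0) with hKdef
  -- mutual reach between any pair of vertices
  obtain ⟨i₀, j₀, hr1⟩ := h1
  obtain ⟨i₁, j₁, hr2⟩ := h2
  have hcc' : ∀ i j, Reach s t (c.ve i) (c'.ve j) := fun i j =>
    ((cycle_reach c i i₀).trans hr1).trans (cycle_reach c' j₀ j)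
  have hc'c : ∀ i j, Reach s t (c'.ve i) (c.ve j) := fun i j =>
    ((cycle_reach c' i i₁).trans hr2).trans (cycle_reach c j₁ j)
  have hKc : ∀ i, d (c.ve i) = K := fun i => cycle_const hd c i 0
  have hKc' : ∀ j, d (c'.ve j) = K := fun j =>
    le_antisymm (by rw [← hKc 0]; exact reach_mono hd (hcc' 0 j))
      (by rw [← hKc 0]; exact reach_mono hd (hc'c j 0))
  -- walk from c.ve 0 to c'.ve 0 stays on c
  obtain ⟨l, hl⟩ := reach_iff_walk.1 (hcc' 0 0)
  have hsand : ∀ k, d (wv t (c.ve 0) l k) = K := by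
    intro k
    have h1 := reach_mono hd (reach_wv hl k).1
    have h2 := le_trans (reach_mono hd (hc'c 0 0)) (reach_mono hd (reach_wv hl k).2)
    rw [hKdef]
    omega
  have hmem : ∀ k ≤ l.length, ∃ m, wv t (c.ve 0) l k = c.ve m := by
    intro k hk
    induction k with
    | zero => exact ⟨0, by simp⟩
    | succ k ih =>
      obtain ⟨m, hm⟩ := ih (by omega)
      set ek := l.getD k (c.ed 0) with hek
      have hs1 : s ek = c.ve m := by rw [walk_s_get hl (by omega) (c.ed 0), hm]
      have ht1 : t ek = wv t (c.ve 0) l (k + 1) := walk_t_get hl (by omega) (c.ed 0)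
      have : ek = c.ed m := by
        by_contra hne'
        have := forced_edge hd c hs1 hne'
        rw [ht1, hsand (k+1)] at this
        exact hK this
      exact ⟨m + 1, by rw [← ht1, this, c.ht]⟩
  obtain ⟨m₁, hm₁⟩ := hmem l.length le_rfl
  rw [wv_last hl le_rfl] at hm₁
  -- the edge of c' out of a c-vertex is the c-edge
  have edlem : ∀ (j : ZMod c'.n) (m : ZMod c.n), c'.ve j = c.ve m → c'.ed j = c.ed m := by
    intro j m hjm
    by_contra hne'
    have := forced_edge hd c (by rw [c'.hs, hjm]) hne'
    rw [c'.ht, hKc'] at this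
    exact hK this
  -- all vertices of c' lie on c
  have veclaim : ∀ k : ℕ, ∃ m, c'.ve (k : ZMod c'.n) = c.ve m := by
    intro k
    induction k with
    | zero => exact ⟨m₁, by simpa using hm₁⟩
    | succ k ih =>
      obtain ⟨m, hm⟩ := ih
      refine ⟨m + 1, ?_⟩
      have : ((k + 1 : ℕ) : ZMod c'.n) = (k : ZMod c'.n) + 1 := by push_cast; ring
      rw [this, ← c'.ht, edlem _ _ hm, c.ht]
  have hsub : Set.range c'.ed ⊆ Set.range c.ed := by
    rintro e ⟨i, rfl⟩
    obtain ⟨m, hm⟩ := veclaim i.val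
    rw [ZMod.natCast_zmod_val] at hm
    exact ⟨m, (edlem i m hm).symm⟩
  exact hne (edge_subset_eq c c' hsub)

end Mutual

section Support

variable {V E : Type} {s t : E → V} [Fintype V] [Fintype E] [DecidableEq V] {d : V → ℕ}

/-- cycle-to-cycle reachability -/
def CR (s t : E → V) (c c' : CycleData s t) : Prop := ∃ i j, Reach s t (c.ve i) (c'.ve j)

lemma CR_refl (c : CycleData s t) : CR s t c c := ⟨0, 0, Relation.ReflTransGen.refl⟩

lemma CR_trans {c c' c'' : CycleData s t} (h1 : CR s t c c') (h2 : CR s t c' c'') :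
    CR s t c c'' := by
  obtain ⟨i, j, h1⟩ := h1
  obtain ⟨i', j', h2⟩ := h2
  exact ⟨i, j', (h1.trans (cycle_reach c' j i')).trans h2⟩

lemma same_edges_same_vertices {ca cb : CycleData s t}
    (h : Set.range ca.ed = Set.range cb.ed) : Set.range ca.ve = Set.range cb.ve := by
  rw [cycle_vertexset, cycle_vertexset, h]

lemma CR_of_same_edges {ca cb : CycleData s t} (h : Set.range ca.ed = Set.range cb.ed) :
    CR s t ca cb := by
  have h1 := same_edges_same_vertices h
  have : cb.ve 0 ∈ Set.range ca.ve := h1 ▸ ⟨0, rfl⟩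
  obtain ⟨i, hi⟩ := this
  exact ⟨i, 0, hi ▸ Relation.ReflTransGen.refl⟩

lemma exists_pos_out (hd : IsDimFun s t d) {v : V} (hv : ∃ e, s e = v) (hpos : 0 < d v) :
    ∃ e, s e = v ∧ 0 < d (t e) := by
  by_contra hc
  push_neg at hc
  have : d v = 0 := by
    rw [dim_sum hd hv]
    exact Finset.sum_eq_zero fun e _ => by have := hc e.1 e.2; omega
  omega

/-- From a vertex of positive dimension, reach a positive sink or a positive cycle. -/
lemma support_sink_or_cycle (hd : IsDimFun s t d) {v₀ : V} (hpos : 0 < d v₀) :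
    (∃ u, 0 < d u ∧ IsSink s t u) ∨ (∃ c : CycleData s t, 0 < d (c.ve 0)) := by
  classical
  have grow : ∀ k : ℕ, (∃ u, 0 < d u ∧ IsSink s t u) ∨
      (∃ l : List E, ∃ u, IsWalk s t v₀ l u ∧ l.length = k ∧
        ∀ m, 0 < d (wv t v₀ l m)) := by
    intro k
    induction k with
    | zero => exact Or.inr ⟨[], v₀, rfl, rfl, fun m => by simpa using hpos⟩
    | succ k ih =>
      rcases ih with h | ⟨l, u, hw, hlen, hp⟩
      · exact Or.inl h
      rcases em (∃ e, s e = u) with he | he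
      · obtain ⟨e, he1, he2⟩ := exists_pos_out hd he (by
          have := hp l.length; rwa [wv_last hw le_rfl] at this)
        have hwe : IsWalk s t v₀ (l ++ [e]) (t e) := by
          rw [isWalk_append]
          exact ⟨u, hw, isWalk_cons.mpr ⟨he1, isWalk_nil.mpr rfl⟩⟩
        refine Or.inr ⟨l ++ [e], t e, hwe, by simp [hlen], ?_⟩
        intro m
        rcases le_or_gt m l.length with hm | hm
        · have heq : wv t v₀ (l ++ [e]) m = wv t v₀ l m := by
            have h1 := walk_take hwe m
            rw [List.take_append_of_le_length hm] at h1
            exact walk_det h1 (walk_take hw m)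
          rw [heq]; exact hp m
        · have : wv t v₀ (l ++ [e]) m = t e := wv_last hwe (by simp; omega)
          rw [this]; exact he2
      · exact Or.inl ⟨u, by have := hp l.length; rwa [wv_last hw le_rfl] at this, he⟩
  rcases grow (Fintype.card V) with h | ⟨l, u, hw, hlen, hp⟩
  · exact Or.inl h
  right
  have hcard : Fintype.card V < Fintype.card (Fin (Fintype.card V + 1)) := by simp
  obtain ⟨i, j, hij, heq⟩ := Fintype.exists_ne_map_eq_of_card_lt
    (fun i : Fin (Fintype.card V + 1) => wv t v₀ l i.val) hcard
  wlog hlt : i.val < j.val generalizing i j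
  · exact this j i hij.symm heq.symm (by omega)
  have hjl : j.val ≤ l.length := by omega
  set x := wv t v₀ l i.val with hx
  have hmid : IsWalk s t x ((l.take j.val).drop i.val) x := by
    have h1 := walk_drop (walk_take hw j.val) i.val
    rw [wv_take hw hlt.le] at h1
    rw [← heq] at h1
    exact h1
  have hne : (l.take j.val).drop i.val ≠ [] := by
    intro hnil
    have := congrArg List.length hnil
    simp [List.length_drop, List.length_take] at this
    omega
  obtain ⟨e, m, hem⟩ : ∃ e m, (l.take j.val).drop i.val = e :: m := by
    cases hdm : (l.take j.val).drop i.val with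
    | nil => exact absurd hdm hne
    | cons e m => exact ⟨e, m, rfl⟩
  rw [hem] at hmid
  obtain ⟨c, hc0, _⟩ := exists_cycle_of_closed_walk hmid
  exact ⟨c, by rw [hc0, hx]; exact hp i.val⟩

/-- From a cycle of positive dimension, climb to a maximal cycle of positive dimension. -/
lemma climb (hd : IsDimFun s t d) (c₀ : CycleData s t) (hpos : 0 < d (c₀.ve 0)) :
    ∃ c : CycleData s t, IsMaxCycle s t c ∧ 0 < d (c.ve 0) := by
  classical
  set S : Finset (Set E) :=
    Finset.univ.filter (fun T => ∃ c' : CycleData s t, Set.range c'.ed = T ∧ CR s t c' c₀)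
    with hS
  have hmemS : ∀ T, T ∈ S ↔ ∃ c' : CycleData s t, Set.range c'.ed = T ∧ CR s t c' c₀ := by
    intro T; simp [hS]
  set TR : Set E → Set E → Prop :=
    fun T T' => ∃ ca cb : CycleData s t, Set.range ca.ed = T ∧ Set.range cb.ed = T' ∧
      CR s t ca cb with hTR
  set h : Set E → ℕ := fun T => (Finset.univ.filter (fun T' => T' ∈ S ∧ TR T T')).card with hh
  have hSne : S.Nonempty := ⟨Set.range c₀.ed, (hmemS _).2 ⟨c₀, rfl, CR_refl c₀⟩⟩
  obtain ⟨T₀, hT₀S, hmax⟩ := Finset.exists_max_image S h hSne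
  obtain ⟨cst, hcst, hcstr⟩ := (hmemS T₀).1 hT₀S
  -- positivity on any cycle reaching c₀
  have hposc : ∀ c' : CycleData s t, CR s t c' c₀ → 0 < d (c'.ve 0) := by
    rintro c' ⟨i, j, hr⟩
    have h1 := reach_mono hd hr
    have h2 : d (c₀.ve j) = d (c₀.ve 0) := cycle_const hd c₀ j 0
    have h3 : d (c'.ve i) = d (c'.ve 0) := cycle_const hd c' i 0
    omega
  refine ⟨cst, ?_, hposc cst hcstr⟩
  intro c'' hr''
  have hc''c₀ : CR s t c'' c₀ := CR_trans hr'' hcstr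
  have hT''S : Set.range c''.ed ∈ S := (hmemS _).2 ⟨c'', rfl, hc''c₀⟩
  -- first, c* reaches c''
  have hback : CR s t cst c'' := by
    by_contra hnr
    have hsub : Finset.univ.filter (fun T' => T' ∈ S ∧ TR T₀ T')
        ⊆ Finset.univ.filter (fun T' => T' ∈ S ∧ TR (Set.range c''.ed) T') := by
      intro T' hT'
      simp only [Finset.mem_filter, Finset.mem_univ, true_and] at hT' ⊢
      obtain ⟨ca, cb, hca, hcb, hcab⟩ := hT'.2
      refine ⟨hT'.1, c'', cb, rfl, hcb, ?_⟩
      have : CR s t cst ca := CR_of_same_edges (by rw [hca, hcst])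
      exact CR_trans hr'' (CR_trans this hcab)
    have hmem2 : Set.range c''.ed ∈ Finset.univ.filter
        (fun T' => T' ∈ S ∧ TR (Set.range c''.ed) T') := by
      simp only [Finset.mem_filter, Finset.mem_univ, true_and]
      exact ⟨hT''S, c'', c'', rfl, rfl, CR_refl c''⟩
    have hmem3 : Set.range c''.ed ∉ Finset.univ.filter
        (fun T' => T' ∈ S ∧ TR T₀ T') := by
      simp only [Finset.mem_filter, Finset.mem_univ, true_and]
      rintro ⟨-, ca, cb, hca, hcb, hcab⟩
      refine hnr ?_
      have h1 : CR s t cst ca := CR_of_same_edges (by rw [hca, hcst])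
      have h2 : CR s t cb c'' := CR_of_same_edges hcb
      exact CR_trans h1 (CR_trans hcab h2)
    have hlt : h T₀ < h (Set.range c''.ed) :=
      Finset.card_lt_card (Finset.ssubset_iff_of_subset hsub |>.2 ⟨_, hmem2, hmem3⟩)
    have := hmax _ hT''S
    omega
  -- mutual reach; distinct edge sets would force dimension zero
  by_contra hne
  have := mutual_cycles_dzero hd cst c'' hback hr'' hne
  have := hposc cst hcstr
  omega

/-- Key support lemma. -/
lemma support_max (hd : IsDimFun s t d) {v₀ : V} (hpos : 0 < d v₀) :
    (∃ w, IsMaxSink s t w ∧ 0 < d w) ∨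
      (∃ c : CycleData s t, IsMaxCycle s t c ∧ 0 < d (c.ve 0)) := by
  classical
  rcases support_sink_or_cycle hd hpos with ⟨u, hu, husink⟩ | ⟨c, hc⟩
  · rcases em (IsMaxSink s t u) with hm | hm
    · exact Or.inl ⟨u, hm, hu⟩
    · rw [IsMaxSink, not_and] at hm
      have := hm husink
      push_neg at this
      obtain ⟨c, i, hci⟩ := this
      have h1 : 0 < d (c.ve 0) := by
        have h2 := reach_mono hd hci
        have h3 : d (c.ve i) = d (c.ve 0) := cycle_const hd c i 0
        omega
      exact Or.inr (climb hd c h1)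
  · exact Or.inr (climb hd c hc)

end Support

section FHdef

variable {V E : Type} (s t : E → V)

/-- First-hit walks into `A`: walks ending in `A`, meeting `A` only at the end. -/
def FH (A : Set V) : V → List E → Prop
  | v, [] => v ∈ A
  | v, e :: l => v ∉ A ∧ s e = v ∧ FH A (t e) l

/-- The generator associated to a target set `A`: counts first-hit walks. -/
noncomputable def gA (A : Set V) (v : V) : ℕ := Nat.card {l : List E // FH s t A v l}

/-- No cycle outside of `A` can reach `A`. -/
def NoEnter (A : Set V) : Prop :=
  ∀ c : CycleData s t, (∃ x ∈ A, Reach s t (c.ve 0) x) → c.ve 0 ∈ A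

end FHdef

section FHlemmas

variable {V E : Type} {s t : E → V} {A : Set V} {v : V} {e : E} {l : List E}

@[simp] lemma FH_nil : FH s t A v [] ↔ v ∈ A := Iff.rfl

@[simp] lemma FH_cons : FH s t A v (e :: l) ↔ v ∉ A ∧ s e = v ∧ FH s t A (t e) l := Iff.rfl

lemma FH_walk (h : FH s t A v l) :
    IsWalk s t v l (wv t v l l.length) ∧ wv t v l l.length ∈ A := by
  induction l generalizing v with
  | nil => exact ⟨rfl, h⟩
  | cons e l ih =>
    obtain ⟨h1, h2, h3⟩ := h
    exact ⟨⟨h2, (ih h3).1⟩, (ih h3).2⟩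

lemma FH_reach (h : FH s t A v l) : ∃ x ∈ A, Reach s t v x :=
  ⟨_, (FH_walk h).2, walk_reach (FH_walk h).1⟩

lemma FH_interior (h : FH s t A v l) : ∀ k < l.length, wv t v l k ∉ A := by
  induction l generalizing v with
  | nil => intro k hk; simp at hk
  | cons e l ih =>
    intro k hk
    cases k with
    | zero => simpa using h.1
    | succ k => simpa using ih h.2.2 k (by simpa using hk)

lemma sink_reach {x : V} (hv : IsSink s t v) (h : Reach s t v x) : x = v := by
  rw [Reach] at h
  rcases Relation.ReflTransGen.cases_head h with rfl | ⟨u, ⟨e, he, -⟩, -⟩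
  · rfl
  · exact absurd ⟨e, he⟩ hv

end FHlemmas

section FHfin

variable {V E : Type} {s t : E → V} [Fintype V] [Fintype E] [DecidableEq V]
  {A : Set V} {v : V}

lemma FH_length (hA : NoEnter s t A) {l : List E} (h : FH s t A v l) :
    l.length + 1 ≤ Fintype.card V := by
  have hw := (FH_walk h).1
  have hnd : ∀ i j : ℕ, i < j → j ≤ l.length → wv t v l i ≠ wv t v l j := by
    intro i j hij hjl heq
    have hmid : IsWalk s t (wv t v l i) ((l.take j).drop i) (wv t v l i) := by
      have h1 := walk_drop (walk_take hw j) i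
      rw [wv_take hw hij.le] at h1
      rw [← heq] at h1
      exact h1
    have hne : (l.take j).drop i ≠ [] := by
      intro hnil
      have := congrArg List.length hnil
      simp [List.length_drop, List.length_take] at this
      omega
    obtain ⟨e, m, hem⟩ : ∃ e m, (l.take j).drop i = e :: m := by
      cases hdm : (l.take j).drop i with
      | nil => exact absurd hdm hne
      | cons e m => exact ⟨e, m, rfl⟩
    rw [hem] at hmid
    obtain ⟨c, hc0, -⟩ := exists_cycle_of_closed_walk hmid
    have hint : wv t v l i ∉ A := FH_interior h i (by omega)
    refine hint ?_
    rw [← hc0]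
    refine hA c ⟨wv t v l l.length, (FH_walk h).2, ?_⟩
    rw [hc0]
    exact walk_reach (walk_drop hw i)
  have hinj : Function.Injective (fun k : Fin (l.length + 1) => wv t v l k.val) := by
    intro a b hab
    by_contra hne
    rcases Ne.lt_or_gt (Fin.val_ne_of_ne hne) with h1 | h1
    · exact hnd a.val b.val h1 (by omega) hab
    · exact hnd b.val a.val h1 (by omega) hab.symm
  simpa using Fintype.card_le_of_injective _ hinj

lemma FH_finite (hA : NoEnter s t A) (v : V) : Finite {l : List E // FH s t A v l} := by
  have hsub : {l : List E | FH s t A v l} ⊆ {l : List E | l.length ≤ Fintype.card V} := by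
    intro l hl
    have := FH_length hA hl
    simp only [Set.mem_setOf_eq]
    omega
  exact ((List.finite_length_le E (Fintype.card V)).subset hsub).to_subtype

lemma gA_mem (hv : v ∈ A) : gA s t A v = 1 := by
  haveI : Unique {l : List E // FH s t A v l} :=
    { default := ⟨[], hv⟩
      uniq := by
        rintro ⟨l, hl⟩
        cases l with
        | nil => rfl
        | cons e m => exact absurd hv hl.1 }
  exact Nat.card_unique

lemma gA_zero (h : ¬ ∃ x ∈ A, Reach s t v x) : gA s t A v = 0 := by
  haveI : IsEmpty {l : List E // FH s t A v l} := ⟨fun p => h (FH_reach p.2)⟩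
  exact Nat.card_of_isEmpty

/-- The decomposition equivalence for first-hit walks. -/
def fhEquiv (A : Set V) (v : V) (hv : v ∉ A) :
    {l : List E // FH s t A v l} ≃
      (e : {e : E // s e = v}) × {l : List E // FH s t A (t e.1) l} where
  toFun p :=
    match p with
    | ⟨[], h⟩ => absurd h hv
    | ⟨e :: l, h⟩ => ⟨⟨e, h.2.1⟩, ⟨l, h.2.2⟩⟩
  invFun q := ⟨q.1.1 :: q.2.1, ⟨hv, q.1.2, q.2.2⟩⟩
  left_inv p := by
    match p with
    | ⟨[], h⟩ => exact absurd h hv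
    | ⟨e :: l, h⟩ => rfl
  right_inv q := rfl

lemma gA_rec (hA : NoEnter s t A) (hv : v ∉ A) :
    gA s t A v = ∑ e : {e : E // s e = v}, gA s t A (t e.1) := by
  classical
  haveI hfin : ∀ e : {e : E // s e = v}, Finite {l : List E // FH s t A (t e.1) l} :=
    fun e => FH_finite hA _
  letI I : ∀ e : {e : E // s e = v}, Fintype {l : List E // FH s t A (t e.1) l} :=
    fun e => Fintype.ofFinite _
  have h1 : Nat.card {l : List E // FH s t A v l} =
      Nat.card ((e : {e : E // s e = v}) × {l : List E // FH s t A (t e.1) l}) :=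
    Nat.card_congr (fhEquiv A v hv)
  rw [gA, h1, Nat.card_eq_fintype_card, Fintype.card_sigma]
  exact Finset.sum_congr rfl fun e _ => (Nat.card_eq_fintype_card).symm

end FHfin

section Generators

variable {V E : Type} {s t : E → V} [Fintype V] [Fintype E] [DecidableEq V] {d : V → ℕ}

lemma noenter_sink {w : V} (hw : IsMaxSink s t w) : NoEnter s t {w} := by
  rintro c ⟨x, hx, hr⟩
  rw [Set.mem_singleton_iff] at hx
  exact absurd (hx ▸ hr) (hw.2 c 0)

lemma noenter_cycle {c : CycleData s t} (hc : IsMaxCycle s t c) :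
    NoEnter s t (Set.range c.ve) := by
  rintro c' ⟨x, ⟨j, rfl⟩, hr⟩
  have heq := hc c' ⟨0, j, hr⟩
  have := same_edges_same_vertices heq
  rw [← this]
  exact ⟨0, rfl⟩

/-- no out-edge of a maximal cycle other than the cycle edges can return to the cycle -/
lemma max_cycle_no_return {c : CycleData s t} (hc : IsMaxCycle s t c) {m : ZMod c.n} {e : E}
    (hse : s e = c.ve m) (hne : e ≠ c.ed m) :
    ¬ ∃ x ∈ Set.range c.ve, Reach s t (t e) x := by
  rintro ⟨x, ⟨k, rfl⟩, hr⟩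
  obtain ⟨l₁, hl₁⟩ := reach_iff_walk.1 hr
  obtain ⟨l₂, hl₂⟩ := reach_iff_walk.1 (cycle_reach c k m)
  have hwalk : IsWalk s t (c.ve m) (e :: (l₁ ++ l₂)) (c.ve m) :=
    ⟨hse, isWalk_append.2 ⟨c.ve k, hl₁, hl₂⟩⟩
  obtain ⟨c₂, hc₂0, hc₂e⟩ := exists_cycle_of_closed_walk hwalk
  have heq := hc c₂ ⟨0, m, hc₂0 ▸ Relation.ReflTransGen.refl⟩
  have : e ∈ Set.range c.ed := heq ▸ (hc₂e ▸ ⟨0, rfl⟩)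
  obtain ⟨k', hk'⟩ := this
  have : c.ve k' = c.ve m := by rw [← c.hs k', hk', hse]
  exact hne (by rw [← hk', c.inj this])

lemma gA_dimfun_sink {w : V} (hw : IsMaxSink s t w) : IsDimFun s t (gA s t {w}) := by
  intro v hv
  have hvw : v ≠ w := fun h => hw.1 (h ▸ hv)
  rw [finsum_eq_sum_of_fintype]
  exact gA_rec (noenter_sink hw) (by simpa using hvw)

lemma gA_dimfun_cycle {c : CycleData s t} (hc : IsMaxCycle s t c) :
    IsDimFun s t (gA s t (Set.range c.ve)) := by
  intro v hv
  rw [finsum_eq_sum_of_fintype]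
  rcases em (v ∈ Set.range c.ve) with hmem | hmem
  · obtain ⟨m, rfl⟩ := hmem
    have h0 : ∀ b : {e : E // s e = c.ve m}, b ∈ Finset.univ →
        b ≠ ⟨c.ed m, c.hs m⟩ → gA s t (Set.range c.ve) (t b.1) = 0 := by
      intro b _ hb
      have hbne : b.1 ≠ c.ed m := fun h => hb (Subtype.ext h)
      exact gA_zero (max_cycle_no_return hc b.2 hbne)
    rw [gA_mem (Set.mem_range_self m),
      Finset.sum_eq_single_of_mem (⟨c.ed m, c.hs m⟩ : {e : E // s e = c.ve m})
        (Finset.mem_univ _) h0, show t (c.ed m) = c.ve (m + 1) from c.ht m]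
    exact (gA_mem (Set.mem_range_self (m + 1))).symm
  · exact gA_rec (noenter_cycle hc) hmem

lemma gA_le_sink (hd : IsDimFun s t d) {w : V} (hw : IsMaxSink s t w) (hdw : 1 ≤ d w) :
    ∀ v, gA s t {w} v ≤ d v := by
  have hP : ∀ v, Reach s t v w → ∀ c : CycleData s t, c.ve 0 = v → False := by
    intro v hvw c hc0
    exact hw.2 c 0 (hc0 ▸ hvw)
  intro v
  induction v using (wf_of_no_cycle hP).induction with
  | _ v ih =>
  rcases em (Reach s t v w) with hreach | hreach
  · rcases em (v = w) with hvw | hvw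
    · rw [hvw, gA_mem (show w ∈ ({w} : Set V) from rfl)]
      exact hvw ▸ hdw
    · rcases em (∃ e, s e = v) with hv | hv
      · rw [gA_rec (noenter_sink hw) (by simpa using hvw), dim_sum hd hv]
        refine Finset.sum_le_sum ?_
        rintro ⟨e, he⟩ -
        rcases em (Reach s t (t e) w) with hre | hre
        · exact ih (t e) ⟨⟨e, he, rfl⟩, hre, hreach⟩
        · rw [gA_zero (by simpa using hre)]
          exact Nat.zero_le _
      · exact absurd (sink_reach hv hreach).symm hvw
  · rw [gA_zero (by simpa using hreach)]
    exact Nat.zero_le _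

lemma gA_le_cycle (hd : IsDimFun s t d) {c : CycleData s t} (hc : IsMaxCycle s t c)
    (hdc : 1 ≤ d (c.ve 0)) : ∀ v, gA s t (Set.range c.ve) v ≤ d v := by
  set A := Set.range c.ve with hA
  have hdA : ∀ x ∈ A, 1 ≤ d x := by
    rintro x ⟨i, rfl⟩
    rw [cycle_const hd c i 0]
    exact hdc
  have hP : ∀ v, (v ∉ A ∧ ∃ x ∈ A, Reach s t v x) → ∀ c₂ : CycleData s t,
      c₂.ve 0 = v → False := by
    rintro v ⟨hvA, hx⟩ c₂ hc₂0
    exact hvA (hc₂0 ▸ noenter_cycle hc c₂ (hc₂0 ▸ hx))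
  intro v
  induction v using (wf_of_no_cycle hP).induction with
  | _ v ih =>
  rcases em (v ∈ A) with hvA | hvA
  · rw [gA_mem hvA]; exact hdA v hvA
  rcases em (∃ x ∈ A, Reach s t v x) with hre | hre
  · have hv : ∃ e, s e = v := by
      by_contra hsink
      obtain ⟨x, hxA, hxr⟩ := hre
      exact hvA ((sink_reach hsink hxr) ▸ hxA)
    rw [gA_rec (noenter_cycle hc) hvA, dim_sum hd hv]
    refine Finset.sum_le_sum ?_
    rintro ⟨e, he⟩ -
    rcases em (t e ∈ A) with hteA | hteA
    · rw [gA_mem hteA]; exact hdA _ hteA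
    rcases em (∃ x ∈ A, Reach s t (t e) x) with hre2 | hre2
    · exact ih (t e) ⟨⟨e, he, rfl⟩, ⟨hteA, hre2⟩, ⟨hvA, hre⟩⟩
    · rw [gA_zero hre2]
      exact Nat.zero_le _
  · rw [gA_zero hre]
    exact Nat.zero_le _

/-- subtraction of dimension functions -/
lemma dimfun_sub (hd : IsDimFun s t d) {g : V → ℕ} (hg : IsDimFun s t g)
    (hle : ∀ v, g v ≤ d v) : IsDimFun s t (fun v => d v - g v) := by
  intro v hv
  rw [finsum_eq_sum_of_fintype]
  simp only
  rw [Finset.sum_tsub_distrib Finset.univ (fun i _ => hle _), ← dim_sum hd hv, ← dim_sum hg hv]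

end Generators

section Assembly

variable {V E : Type} (s t : E → V) [Fintype V] [Fintype E] [DecidableEq V]

abbrev MS := {v : V // IsMaxSink s t v}
abbrev MC := {S : Set E // ∃ c : CycleData s t, IsMaxCycle s t c ∧ S = Set.range c.ed}
abbrev Idx := MS s t ⊕ MC s t

noncomputable instance : Fintype (Idx s t) := Fintype.ofFinite _

noncomputable def cycOf (S : MC s t) : CycleData s t := S.2.choose

lemma cycOf_max (S : MC s t) : IsMaxCycle s t (cycOf s t S) := S.2.choose_spec.1

lemma cycOf_ed (S : MC s t) : S.1 = Set.range (cycOf s t S).ed := S.2.choose_spec.2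

noncomputable def AsetI : Idx s t → Set V :=
  Sum.elim (fun w => {w.1}) (fun S => Set.range (cycOf s t S).ve)

noncomputable def vertI : Idx s t → V :=
  Sum.elim (fun w => w.1) (fun S => (cycOf s t S).ve 0)

@[simp] lemma AsetI_inl (w : MS s t) : AsetI s t (Sum.inl w) = {w.1} := rfl
@[simp] lemma AsetI_inr (S : MC s t) :
    AsetI s t (Sum.inr S) = Set.range (cycOf s t S).ve := rfl
@[simp] lemma vertI_inl (w : MS s t) : vertI s t (Sum.inl w) = w.1 := rfl
@[simp] lemma vertI_inr (S : MC s t) : vertI s t (Sum.inr S) = (cycOf s t S).ve 0 := rfl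

noncomputable def GI (i : Idx s t) : V → ℕ := gA s t (AsetI s t i)

lemma GI_dimfun (i : Idx s t) : IsDimFun s t (GI s t i) := by
  cases i with
  | inl w => exact gA_dimfun_sink w.2
  | inr S => exact gA_dimfun_cycle (cycOf_max s t S)

lemma vertI_mem (i : Idx s t) : vertI s t i ∈ AsetI s t i := by
  cases i with
  | inl w => exact rfl
  | inr S => exact ⟨0, rfl⟩

lemma GI_eval_self (i : Idx s t) : GI s t i (vertI s t i) = 1 :=
  gA_mem (vertI_mem s t i)

lemma GI_eval_ne {i j : Idx s t} (hij : i ≠ j) : GI s t i (vertI s t j) = 0 := by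
  cases i with
  | inl w =>
    cases j with
    | inl w' =>
      refine gA_zero ?_
      rintro ⟨x, hx, hr⟩
      simp only [AsetI_inl, Set.mem_singleton_iff] at hx
      subst hx
      have := sink_reach w'.2.1 hr
      exact hij (by rw [Sum.inl.injEq]; exact Subtype.ext this)
    | inr S =>
      refine gA_zero ?_
      rintro ⟨x, hx, hr⟩
      simp only [AsetI_inl, Set.mem_singleton_iff] at hx
      subst hx
      exact w.2.2 (cycOf s t S) 0 hr
  | inr S =>
    cases j with
    | inl w' =>
      refine gA_zero ?_
      rintro ⟨x, ⟨k, rfl⟩, hr⟩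
      have h1 := sink_reach w'.2.1 hr
      exact w'.2.1 (h1 ▸ cycle_nonsink (cycOf s t S) k)
    | inr S' =>
      refine gA_zero ?_
      rintro ⟨x, ⟨k, rfl⟩, hr⟩
      have h1 := cycOf_max s t S (cycOf s t S') ⟨0, k, hr⟩
      refine hij ?_
      rw [Sum.inr.injEq]
      exact Subtype.ext (by rw [cycOf_ed s t S, cycOf_ed s t S', h1])

variable {s t}

lemma decomp_zero {d : V → ℕ} (hd : IsDimFun s t d)
    (hno : ∀ i : Idx s t, d (vertI s t i) = 0) : ∀ u, d u = 0 := by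
  intro u
  by_contra hu
  rcases support_max hd (Nat.pos_of_ne_zero hu) with ⟨w, hw, hpos⟩ | ⟨c, hc, hpos⟩
  · have := hno (Sum.inl ⟨w, hw⟩)
    simp only [vertI_inl] at this
    omega
  · set S : MC s t := ⟨Set.range c.ed, c, hc, rfl⟩ with hS
    have h1 : Set.range (cycOf s t S).ve = Set.range c.ve := by
      refine (same_edges_same_vertices ?_)
      rw [← cycOf_ed s t S]
    have h2 : (cycOf s t S).ve 0 ∈ Set.range c.ve := h1 ▸ ⟨0, rfl⟩
    obtain ⟨k, hk⟩ := h2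
    have := hno (Sum.inr S)
    simp only [vertI_inr] at this
    rw [← hk, cycle_const hd c k 0] at this
    omega

lemma GI_le {d : V → ℕ} (hd : IsDimFun s t d) (i : Idx s t)
    (hpos : 0 < d (vertI s t i)) : ∀ u, GI s t i u ≤ d u := by
  cases i with
  | inl w => exact gA_le_sink hd w.2 hpos
  | inr S => exact gA_le_cycle hd (cycOf_max s t S) hpos

lemma decomp {d : V → ℕ} (hd : IsDimFun s t d) (v : V) :
    d v = ∑ i : Idx s t, d (vertI s t i) * GI s t i v := by
  classical
  suffices H : ∀ N (d : V → ℕ), IsDimFun s t d → (∑ u, d u) ≤ N →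
      ∀ v, d v = ∑ i : Idx s t, d (vertI s t i) * GI s t i v from
    H _ d hd le_rfl v
  intro N
  induction N with
  | zero =>
    intro d hd hsum v
    have hz : ∀ u, d u = 0 := by
      intro u
      have := Finset.single_le_sum (f := d) (fun _ _ => Nat.zero_le _) (Finset.mem_univ u)
      omega
    rw [hz v]
    exact (Finset.sum_eq_zero fun i _ => by rw [hz, zero_mul]).symm
  | succ N ih =>
    intro d hd hsum v
    rcases em (∃ i : Idx s t, 0 < d (vertI s t i)) with ⟨i₀, hi₀⟩ | hno
    · have hle := GI_le hd i₀ hi₀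
      have hd' : IsDimFun s t (fun u => d u - GI s t i₀ u) :=
        dimfun_sub hd (GI_dimfun s t i₀) hle
      have hlt : (∑ u, (d u - GI s t i₀ u)) < ∑ u, d u := by
        refine Finset.sum_lt_sum (fun u _ => Nat.sub_le _ _)
          ⟨vertI s t i₀, Finset.mem_univ _, ?_⟩
        have h1 := GI_eval_self s t i₀
        omega
      have hrec := ih (fun u => d u - GI s t i₀ u) hd'
        (by exact Nat.lt_succ_iff.mp (lt_of_lt_of_le hlt hsum))
      have hcoef : ∀ j, d (vertI s t j) * GI s t j v =
          (d (vertI s t j) - GI s t i₀ (vertI s t j)) * GI s t j v +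
            (if j = i₀ then GI s t i₀ v else 0) := by
        intro j
        rcases em (j = i₀) with rfl | hj
        · have h1 := GI_eval_self s t j
          obtain ⟨k, hk⟩ : ∃ k, d (vertI s t j) = k + 1 := ⟨d (vertI s t j) - 1, by omega⟩
          rw [if_pos rfl, h1, hk]
          simp [Nat.succ_mul]
        · have h1 := GI_eval_ne (s := s) (t := t) (Ne.symm hj)
          rw [if_neg hj, h1, Nat.sub_zero, add_zero]
      calc d v = (d v - GI s t i₀ v) + GI s t i₀ v := by
            have := hle v; omega
        _ = (∑ j : Idx s t, (d (vertI s t j) - GI s t i₀ (vertI s t j)) * GI s t j v)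
              + GI s t i₀ v := by rw [hrec v]
        _ = ∑ j : Idx s t, d (vertI s t j) * GI s t j v := by
            rw [Finset.sum_congr rfl (fun j _ => hcoef j), Finset.sum_add_distrib,
              Finset.sum_ite_eq' Finset.univ i₀ (fun _ => GI s t i₀ v),
              if_pos (Finset.mem_univ _)]
    · push_neg at hno
      have hz := decomp_zero hd (fun i => Nat.eq_zero_of_le_zero (hno i))
      rw [hz v]
      exact (Finset.sum_eq_zero fun i _ => by rw [hz, zero_mul]).symm

end Assembly

/-- The monoid of dimension functions under pointwise addition. -/
def DimMonoid {V E : Type} (s t : E → V) [Finite E] : AddSubmonoid (V → ℕ) where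
  carrier := {d | IsDimFun s t d}
  zero_mem' := fun v _ => by simp
  add_mem' := by
    intro a b ha hb v hv
    have h := finsum_add_distrib (f := fun e : {e : E // s e = v} => a (t e.1))
      (g := fun e : {e : E // s e = v} => b (t e.1)) (Set.toFinite _) (Set.toFinite _)
    simpa [ha v hv, hb v hv] using h.symm

section Final

variable {V E : Type} (s t : E → V) [Fintype V] [Fintype E] [DecidableEq V]

lemma mem_dimMonoid {d : V → ℕ} : d ∈ DimMonoid s t ↔ IsDimFun s t d := Iff.rfl

noncomputable def Phi : DimMonoid s t →+ (Idx s t →₀ ℕ) where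
  toFun d := Finsupp.equivFunOnFinite.symm (fun i => d.1 (vertI s t i))
  map_zero' := by
    ext i
    simp
  map_add' a b := by
    ext i
    simp

lemma Phi_injective : Function.Injective (Phi s t) := by
  intro a b h
  have h2 : ∀ i, a.1 (vertI s t i) = b.1 (vertI s t i) := by
    intro i
    have := Finsupp.equivFunOnFinite.symm.injective h
    exact congrFun this i
  apply Subtype.ext
  funext v
  rw [decomp a.2 v, decomp b.2 v]
  exact Finset.sum_congr rfl fun i _ => by rw [h2 i]

lemma Phi_surjective : Function.Surjective (Phi s t) := by
  intro x
  have hmem : (fun v => ∑ i : Idx s t, x i * GI s t i v) ∈ DimMonoid s t := by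
    have heq : (fun v => ∑ i : Idx s t, x i * GI s t i v) =
        ∑ i : Idx s t, x i • GI s t i := by
      funext v
      rw [Finset.sum_apply]
      simp
    rw [mem_dimMonoid, ← mem_dimMonoid (s := s) (t := t), heq]
    exact sum_mem fun i _ => AddSubmonoid.nsmul_mem _ (GI_dimfun s t i) _
  refine ⟨⟨fun v => ∑ i : Idx s t, x i * GI s t i v, hmem⟩, ?_⟩
  ext i
  have hval : ∑ j : Idx s t, x j * GI s t j (vertI s t i) = x i := by
    rw [Finset.sum_eq_single i (fun j _ hj => by rw [GI_eval_ne (s := s) (t := t) hj, mul_zero])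
      (fun h => absurd (Finset.mem_univ i) h), GI_eval_self, mul_one]
  simpa [Phi] using hval

end Final

/-- For a finite digraph, the monoid of dimension functions is free commutative of rank
(number of maximal sinks) + (number of maximal cycles). -/
theorem stmt11 {V E : Type} [Finite V] [Finite E] (s t : E → V) :
    Nonempty ((DimMonoid s t) ≃+
      (Fin (Nat.card {v : V // IsMaxSink s t v} +
            Nat.card {S : Set E // ∃ c : CycleData s t, IsMaxCycle s t c ∧ S = Set.range c.ed})
        →₀ ℕ)) := by
  letI : Fintype V := Fintype.ofFinite V
  letI : Fintype E := Fintype.ofFinite E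
  letI : DecidableEq V := Classical.decEq V
  have e1 : DimMonoid s t ≃+ (Idx s t →₀ ℕ) :=
    AddEquiv.ofBijective (Phi s t) ⟨Phi_injective s t, Phi_surjective s t⟩
  have hcard : Nat.card (Idx s t) =
      Nat.card {v : V // IsMaxSink s t v} +
        Nat.card {S : Set E // ∃ c : CycleData s t, IsMaxCycle s t c ∧ S = Set.range c.ed} :=
    Nat.card_sum
  have e2 : Idx s t ≃ Fin (Nat.card {v : V // IsMaxSink s t v} +
      Nat.card {S : Set E // ∃ c : CycleData s t, IsMaxCycle s t c ∧ S = Set.range c.ed}) :=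
    Finite.equivFinOfCardEq hcard
  exact ⟨e1.trans (Finsupp.domCongr e2)⟩
end

section
/- Let Γ be a finite acyclic digraph. Then any complete reduction of Γ consists only of isolated vertices, one for each sink of Γ. -/
universe u

structure MyDigraph : Type (u + 1) where
  V : Type u
  E : Type u
  s : E → V
  t : E → V

namespace MyDigraph

def IsSink (Γ : MyDigraph) (v : Γ.V) : Prop := ¬ ∃ e, Γ.s e = v

def HasLoopAt (Γ : MyDigraph) (v : Γ.V) : Prop := ∃ e, Γ.s e = v ∧ Γ.t e = v

/-- A reduced digraph: every vertex is a sink or has a loop. -/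
def IsReduced (Γ : MyDigraph) : Prop := ∀ v, Γ.IsSink v ∨ Γ.HasLoopAt v

/-- A cycle: a closed directed path on pairwise distinct vertices. -/
structure CycleData (Γ : MyDigraph) where
  n : ℕ
  pos : 0 < n
  ve : ZMod n → Γ.V
  ed : ZMod n → Γ.E
  inj : Function.Injective ve
  hs : ∀ i, Γ.s (ed i) = ve i
  ht : ∀ i, Γ.t (ed i) = ve (i + 1)

def Acyclic (Γ : MyDigraph) : Prop := IsEmpty Γ.CycleData

/-- `Γ'` is (isomorphic to) the one-step reduction of `Γ` eliminating a loopless non-sink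
vertex `v`: its vertices are those of `Γ` other than `v`, its arrows are the arrows of `Γ`
not touching `v` together with a new arrow from `s(f)` to `t(g)` for each length-2 path
`f g` through `v`. -/
def IsOneStepReduction (Γ Γ' : MyDigraph) : Prop :=
  ∃ v : Γ.V, ¬ Γ.HasLoopAt v ∧ ¬ Γ.IsSink v ∧
    ∃ (fV : Γ'.V ≃ {w : Γ.V // w ≠ v})
      (fE : Γ'.E ≃ ({e : Γ.E // Γ.s e ≠ v ∧ Γ.t e ≠ v} ⊕
                    {p : Γ.E × Γ.E // Γ.t p.1 = v ∧ Γ.s p.2 = v})),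
      (∀ e, (fV (Γ'.s e) : Γ.V) =
        Sum.elim (fun e' => Γ.s e'.1) (fun p => Γ.s p.1.1) (fE e)) ∧
      (∀ e, (fV (Γ'.t e) : Γ.V) =
        Sum.elim (fun e' => Γ.t e'.1) (fun p => Γ.t p.1.2) (fE e))

/-- A complete reduction of `Γ`: a reduced digraph obtained from `Γ` by finitely many
one-step reductions. -/
def IsCompleteReduction (Γ Γ' : MyDigraph) : Prop :=
  Relation.ReflTransGen IsOneStepReduction Γ Γ' ∧ Γ'.IsReduced

end MyDigraph

namespace MyAux

lemma valSucc {m : ℕ} [NeZero m] (k : ZMod m) :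
    (k + 1).val = k.val + 1 ∨ ((k + 1).val = 0 ∧ k.val + 1 = m) := by
  by_cases hm : m = 1
  · subst hm
    right
    constructor
    · have : (k + 1) = 0 := Subsingleton.elim _ _
      rw [this]; rfl
    · have : k = 0 := Subsingleton.elim _ _
      rw [this]; rfl
  · have h1 : 1 < m := by have := NeZero.pos m; omega
    have h := ZMod.val_add k 1
    haveI : Fact (1 < m) := ⟨h1⟩
    rw [ZMod.val_one m] at h
    have hk := ZMod.val_lt k
    rcases Nat.lt_or_ge (k.val + 1) m with h2 | h2
    · left; rw [h, Nat.mod_eq_of_lt h2]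
    · right
      have h3 : k.val + 1 = m := by omega
      refine ⟨?_, h3⟩
      rw [h, h3, Nat.mod_self]

end MyAux

namespace MyDigraph

/-- The edge relation of a digraph. -/
def Rel (Γ : MyDigraph) (a b : Γ.V) : Prop := ∃ e, Γ.s e = a ∧ Γ.t e = b

lemma exists_walk {Γ : MyDigraph} {a b : Γ.V} (h : Relation.TransGen Γ.Rel a b) :
    ∃ n, 0 < n ∧ ∃ ed : ℕ → Γ.E, Γ.s (ed 0) = a ∧ Γ.t (ed (n - 1)) = b ∧
      ∀ i, i + 1 < n → Γ.t (ed i) = Γ.s (ed (i + 1)) := by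
  induction h with
  | single h =>
    obtain ⟨e, hs, ht⟩ := h
    exact ⟨1, one_pos, fun _ => e, hs, ht, fun i hi => absurd hi (by omega)⟩
  | tail _ h ih =>
    obtain ⟨n, hn, ed, h0, hlast, hchain⟩ := ih
    obtain ⟨e, hs, ht⟩ := h
    refine ⟨n + 1, by omega, fun i => if i < n then ed i else e, ?_, ?_, ?_⟩
    · show Γ.s (if 0 < n then ed 0 else e) = _
      rw [if_pos hn]; exact h0
    · show Γ.t (if n + 1 - 1 < n then ed (n + 1 - 1) else e) = _
      rw [if_neg (by omega)]; exact ht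
    · intro i hi
      rcases Nat.lt_or_ge (i + 1) n with h2 | h2
      · show Γ.t (if i < n then ed i else e) = Γ.s (if i + 1 < n then ed (i + 1) else e)
        rw [if_pos (by omega), if_pos h2]
        exact hchain i h2
      · have hin : i + 1 = n := by omega
        show Γ.t (if i < n then ed i else e) = Γ.s (if i + 1 < n then ed (i + 1) else e)
        rw [if_pos (by omega), if_neg (by omega), show i = n - 1 by omega, hlast, hs]

lemma acyclic_noLoop {Γ : MyDigraph} (h : Γ.Acyclic) (v : Γ.V) :
    ¬ Relation.TransGen Γ.Rel v v := by
  intro hv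
  obtain ⟨n, hn, ed, h0, hlast, hchain⟩ := exists_walk hv
  have hP : ∃ m, 0 < m ∧ ∃ ed' : ZMod m → Γ.E, ∀ i, Γ.t (ed' i) = Γ.s (ed' (i + 1)) := by
    haveI : NeZero n := ⟨hn.ne'⟩
    refine ⟨n, hn, fun i => ed i.val, ?_⟩
    intro i
    rcases MyAux.valSucc i with hv1 | ⟨hv1, hv2⟩
    · show Γ.t (ed i.val) = Γ.s (ed (i + 1).val)
      rw [hv1]
      exact hchain i.val (by rw [← hv1]; exact ZMod.val_lt (i + 1))
    · show Γ.t (ed i.val) = Γ.s (ed (i + 1).val)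
      have hiv : i.val = n - 1 := by have := ZMod.val_lt i; omega
      rw [hv1, hiv, hlast, h0]
  classical
  have hmin := fun m' (h' : m' < Nat.find hP) => Nat.find_min hP h'
  obtain ⟨hm, ed', hcw⟩ := Nat.find_spec hP
  revert hmin hm ed' hcw
  generalize Nat.find hP = m
  intro hmin hm ed' hcw
  haveI : NeZero m := ⟨hm.ne'⟩
  refine h.false ⟨m, hm, fun i => Γ.s (ed' i), ed', ?_, fun _ => rfl, fun i => hcw i⟩
  intro i j hij
  by_contra hne
  have hij' : Γ.s (ed' i) = Γ.s (ed' j) := hij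
  set d := i - j with hd
  have hd0 : d ≠ 0 := sub_ne_zero_of_ne hne
  have hdv : d.val ≠ 0 := fun h' => hd0 ((ZMod.val_eq_zero d).mp h')
  have hdlt : d.val < m := ZMod.val_lt d
  haveI : NeZero d.val := ⟨hdv⟩
  have hshort : 0 < d.val ∧ ∃ ed'' : ZMod d.val → Γ.E,
      ∀ k, Γ.t (ed'' k) = Γ.s (ed'' (k + 1)) := by
    refine ⟨Nat.pos_of_ne_zero hdv, fun k => ed' (j + (k.val : ZMod m)), ?_⟩
    intro k
    show Γ.t (ed' (j + (k.val : ZMod m))) = Γ.s (ed' (j + ((k + 1).val : ZMod m)))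
    rcases MyAux.valSucc k with hv1 | ⟨hv1, hv2⟩
    · have hc1 : ((k.val + 1 : ℕ) : ZMod m) = (k.val : ZMod m) + 1 := by push_cast; ring
      rw [hv1, hc1, ← add_assoc]
      exact hcw _
    · have hc3 : (k.val : ZMod m) + 1 = d := by
        have h5 : ((k.val + 1 : ℕ) : ZMod m) = ((d.val : ℕ) : ZMod m) := by rw [hv2]
        rw [ZMod.natCast_zmod_val] at h5
        push_cast at h5
        exact h5
      rw [hv1, Nat.cast_zero, add_zero, hcw (j + (k.val : ZMod m)), add_assoc, hc3, hd,
        show j + (i - j) = i by ring]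
      exact hij'
  exact absurd hshort (hmin d.val hdlt)

lemma step_noLoop {Γ Γ' : MyDigraph} (h : IsOneStepReduction Γ Γ')
    (hc : ∀ v, ¬ Relation.TransGen Γ.Rel v v) :
    ∀ v, ¬ Relation.TransGen Γ'.Rel v v := by
  obtain ⟨v, -, -, fV, fE, hs, ht⟩ := h
  have key : ∀ x y, Γ'.Rel x y → Relation.TransGen Γ.Rel (fV x) (fV y) := by
    rintro x y ⟨e, rfl, rfl⟩
    have hse := hs e
    have hte := ht e
    rcases hE : fE e with e' | p <;> rw [hE] at hse hte <;> simp only [Sum.elim_inl, Sum.elim_inr] at hse hte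
    · exact Relation.TransGen.single ⟨e'.1, hse.symm, hte.symm⟩
    · rw [hse, hte]
      have h2 : Γ.Rel (Γ.t p.1.1) (Γ.t p.1.2) := ⟨p.1.2, by rw [p.2.2, p.2.1], rfl⟩
      exact (Relation.TransGen.single ⟨p.1.1, rfl, rfl⟩).tail h2
  have lift : ∀ x y, Relation.TransGen Γ'.Rel x y →
      Relation.TransGen Γ.Rel (fV x) (fV y) := by
    intro x y hxy
    induction hxy with
    | single h1 => exact key _ _ h1
    | tail _ h1 ih => exact ih.trans (key _ _ h1)
  intro x hx
  exact hc _ (lift x x hx)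

lemma step_sink {Γ Γ' : MyDigraph} (h : IsOneStepReduction Γ Γ') :
    Nonempty ({w : Γ'.V // Γ'.IsSink w} ≃ {w : Γ.V // Γ.IsSink w}) := by
  obtain ⟨v, -, hns, fV, fE, hs, ht⟩ := h
  have hv : ∃ e, Γ.s e = v := not_not.mp hns
  obtain ⟨g, hg⟩ := hv
  have fwd : ∀ x : Γ'.V, Γ'.IsSink x → Γ.IsSink (fV x : Γ.V) := by
    intro x hx ⟨e, he⟩
    by_cases htv : Γ.t e = v
    · set e' := fE.symm (Sum.inr ⟨(e, g), htv, hg⟩) with he'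
      have := hs e'
      rw [he', Equiv.apply_symm_apply] at this
      simp only [Sum.elim_inr] at this
      have hxx : Γ'.s e' = x := fV.injective (Subtype.coe_injective (this.trans he))
      exact hx ⟨e', hxx⟩
    · have hsv : Γ.s e ≠ v := by rw [he]; exact (fV x).2
      set e' := fE.symm (Sum.inl ⟨e, hsv, htv⟩) with he'
      have := hs e'
      rw [he', Equiv.apply_symm_apply] at this
      simp only [Sum.elim_inl] at this
      have hxx : Γ'.s e' = x := fV.injective (Subtype.coe_injective (this.trans he))
      exact hx ⟨e', hxx⟩
  have bwd : ∀ w : Γ.V, Γ.IsSink w → ∀ hne : w ≠ v, Γ'.IsSink (fV.symm ⟨w, hne⟩) := by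
    intro w hw hne ⟨e', he'⟩
    have := hs e'
    rw [he', Equiv.apply_symm_apply] at this
    rcases hE : fE e' with e'' | p <;> rw [hE] at this <;>
      simp only [Sum.elim_inl, Sum.elim_inr] at this
    · exact hw ⟨e''.1, this.symm⟩
    · exact hw ⟨p.1.1, this.symm⟩
  have hnev : ∀ w : Γ.V, Γ.IsSink w → w ≠ v := fun w hw hwv => hns (hwv ▸ hw)
  refine ⟨⟨fun x => ⟨(fV x.1 : Γ.V), fwd x.1 x.2⟩,
    fun w => ⟨fV.symm ⟨w.1, hnev w.1 w.2⟩, bwd w.1 w.2 (hnev w.1 w.2)⟩, ?_, ?_⟩⟩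
  · intro x
    apply Subtype.ext
    simp
  · intro w
    apply Subtype.ext
    simp

end MyDigraph

/-- Any complete reduction of a finite acyclic digraph consists only of isolated vertices,
one for each sink of the original digraph. -/
theorem stmt12 (Γ Γ' : MyDigraph) (hV : Finite Γ.V) (hE : Finite Γ.E)
    (hacyc : Γ.Acyclic) (hred : MyDigraph.IsCompleteReduction Γ Γ') :
    IsEmpty Γ'.E ∧ Nonempty (Γ'.V ≃ {w : Γ.V // Γ.IsSink w}) := by
  obtain ⟨hrt, hredd⟩ := hred
  have main : (∀ v, ¬ Relation.TransGen Γ'.Rel v v) ∧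
      Nonempty ({w : Γ'.V // Γ'.IsSink w} ≃ {w : Γ.V // Γ.IsSink w}) := by
    clear hredd
    induction hrt with
    | refl => exact ⟨MyDigraph.acyclic_noLoop hacyc, ⟨Equiv.refl _⟩⟩
    | tail _ h1 ih =>
      obtain ⟨ih1, ⟨eqv⟩⟩ := ih
      obtain ⟨eqv2⟩ := MyDigraph.step_sink h1
      exact ⟨MyDigraph.step_noLoop h1 ih1, ⟨eqv2.trans eqv⟩⟩
  obtain ⟨hnl, ⟨eqv⟩⟩ := main
  have hallsink : ∀ x : Γ'.V, Γ'.IsSink x := by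
    intro x
    rcases hredd x with h | ⟨e, he1, he2⟩
    · exact h
    · exact absurd (Relation.TransGen.single ⟨e, he1, he2⟩) (hnl _)
  exact ⟨⟨fun e => hallsink (Γ'.s e) ⟨e, rfl⟩⟩,
    ⟨(Equiv.subtypeUnivEquiv hallsink).symm.trans eqv⟩⟩
end

section
/- Let Γ be a finite digraph whose cycles are pairwise disjoint (no two distinct cycles share a vertex). Then the number of cycles is invariant under one-step reduction: if Γ' is a one-step reduction of Γ eliminating a loopless non-sink v, then Γ' also has pairwise disjoint cycles and the cycles of Γ' are in bijection with the cycles of Γ. -/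
/-- The cycles of a digraph are pairwise disjoint: any two cycles sharing a vertex are equal
(as cycles, i.e. they have the same set of arrows). -/
def DisjointCycles {V E : Type} (s t : E → V) : Prop :=
  ∀ c c' : CycleData s t, (Set.range c.ve ∩ Set.range c'.ve).Nonempty →
    Set.range c.ed = Set.range c'.ed

/-- The set of cycles of a digraph, identified with their sets of arrows
(i.e. cycles up to rotation). -/
def CycleSets {V E : Type} (s t : E → V) : Set (Set E) :=
  {S | ∃ c : CycleData s t, S = Set.range c.ed}

namespace S19

lemma cast_val {n : ℕ} [NeZero n] (i : ZMod n) : ((i.val : ℕ) : ZMod n) = i :=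
  ZMod.natCast_rightInverse i

lemma val_add_one {n : ℕ} [NeZero n] (i : ZMod n) :
    (i + 1).val = if i.val = n - 1 then 0 else i.val + 1 := by
  have hn : 0 < n := Nat.pos_of_ne_zero (NeZero.ne n)
  have hv : i.val < n := ZMod.val_lt i
  have h1 : i + 1 = ((i.val + 1 : ℕ) : ZMod n) := by
    rw [Nat.cast_add, Nat.cast_one, cast_val]
  rw [h1, ZMod.val_natCast]
  split
  · next h => rw [h, Nat.sub_add_cancel hn, Nat.mod_self]
  · next h => exact Nat.mod_eq_of_lt (by omega)

lemma cast_pred {n : ℕ} (hn : 0 < n) : ((n - 1 : ℕ) : ZMod n) = -1 := by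
  have h : ((n - 1 : ℕ) + 1 : ℕ) = n := by omega
  have h2 : (((n - 1 : ℕ) + 1 : ℕ) : ZMod n) = 0 := by rw [h]; exact ZMod.natCast_self n
  rw [Nat.cast_add, Nat.cast_one] at h2
  exact eq_neg_of_add_eq_zero_left h2

variable {V E : Type} {s t : E → V} {v : V} {hl : ∀ e, ¬(s e = v ∧ t e = v)}

/-- canonical edge-set map -/
def Phi (s t : E → V) (v : V) (S : Set E) : Set (RedE s t v) :=
  fun x => match x with
  | .inl e => e.1 ∈ S
  | .inr p => p.1.1 ∈ S ∧ p.1.2 ∈ S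

lemma mem_Phi_inl {S : Set E} {e : {e : E // s e ≠ v ∧ t e ≠ v}} :
    (Sum.inl e ∈ Phi s t v S) ↔ e.1 ∈ S := Iff.rfl

lemma mem_Phi_inr {S : Set E} {p : {p : E × E // t p.1 = v ∧ s p.2 = v}} :
    (Sum.inr p ∈ Phi s t v S) ↔ p.1.1 ∈ S ∧ p.1.2 ∈ S := Iff.rfl

def ext : RedE s t v → E
  | .inl e => e.1
  | .inr p => p.1.1

/-- rotation of a cycle -/
def rot (c : CycleData s t) (j : ZMod c.n) : CycleData s t where
  n := c.n
  pos := c.pos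
  ve i := c.ve (i + j)
  ed i := c.ed (i + j)
  inj a b h := by
    have h2 : c.ve (a + j) = c.ve (b + j) := h
    exact add_right_cancel (c.inj h2)
  hs i := c.hs _
  ht i := by rw [c.ht]; congr 1; ring

lemma rot_ed_range (c : CycleData s t) (j : ZMod c.n) :
    Set.range (rot c j).ed = Set.range c.ed := by
  ext e
  constructor
  · rintro ⟨i, rfl⟩; exact ⟨(show ZMod c.n from i) + j, rfl⟩
  · rintro ⟨i, rfl⟩; exact ⟨i - j, by show c.ed (i - j + j) = c.ed i; rw [sub_add_cancel]⟩

lemma rot_ve_range (c : CycleData s t) (j : ZMod c.n) :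
    Set.range (rot c j).ve = Set.range c.ve := by
  ext w
  constructor
  · rintro ⟨i, rfl⟩; exact ⟨(show ZMod c.n from i) + j, rfl⟩
  · rintro ⟨i, rfl⟩; exact ⟨i - j, by show c.ve (i - j + j) = c.ve i; rw [sub_add_cancel]⟩

/-- lifting a cycle avoiding `v` to the reduction -/
def liftAway (c : CycleData s t) (hv : ∀ i, c.ve i ≠ v) :
    CycleData (RedS s t v hl) (RedT s t v hl) where
  n := c.n
  pos := c.pos
  ve i := ⟨c.ve i, hv i⟩
  ed i := .inl ⟨c.ed i, by rw [c.hs]; exact hv i, by rw [c.ht]; exact hv (i + 1)⟩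
  inj a b h := c.inj (congrArg Subtype.val h)
  hs i := Subtype.ext (c.hs i)
  ht i := Subtype.ext (c.ht i)

lemma liftAway_range (c : CycleData s t) (hv : ∀ i, c.ve i ≠ v) :
    Set.range (liftAway (hl := hl) c hv).ed = Phi s t v (Set.range c.ed) := by
  ext x
  constructor
  · rintro ⟨k, rfl⟩
    exact ⟨k, rfl⟩
  · intro hx
    match x with
    | .inl e =>
      obtain ⟨k, hk⟩ := hx
      exact ⟨k, congrArg Sum.inl (Subtype.ext hk)⟩
    | .inr r =>
      obtain ⟨k, hk⟩ := hx.1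
      exfalso
      have h2 : t (c.ed k) = v := by rw [hk]; exact r.2.1
      rw [c.ht] at h2
      exact hv _ h2

/-- lifting a cycle of the reduction all whose edges are old edges -/
def liftUp (c' : CycleData (RedS s t v hl) (RedT s t v hl))
    (h : ∀ i, ∃ e, c'.ed i = .inl e) : CycleData s t where
  n := c'.n
  pos := c'.pos
  ve i := (c'.ve i).1
  ed i := ext (c'.ed i)
  inj a b hab := c'.inj (Subtype.ext hab)
  hs i := by
    obtain ⟨e, he⟩ := h i
    have h2 := c'.hs i
    rw [he] at h2
    show s (ext (c'.ed i)) = (c'.ve i).1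
    rw [he]
    exact congrArg Subtype.val h2
  ht i := by
    obtain ⟨e, he⟩ := h i
    have h2 := c'.ht i
    rw [he] at h2
    show t (ext (c'.ed i)) = (c'.ve (i + 1)).1
    rw [he]
    exact congrArg Subtype.val h2

lemma liftUp_range (c' : CycleData (RedS s t v hl) (RedT s t v hl))
    (h : ∀ i, ∃ e, c'.ed i = .inl e) :
    Phi s t v (Set.range (liftUp c' h).ed) = Set.range c'.ed := by
  ext x
  constructor
  · intro hx
    match x with
    | .inl e =>
      obtain ⟨k, hk⟩ := hx
      obtain ⟨f, hf⟩ := h k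
      have hk2 : ext (c'.ed k) = e.1 := hk
      rw [hf] at hk2
      exact ⟨k, by rw [hf]; exact congrArg Sum.inl (Subtype.ext hk2)⟩
    | .inr r =>
      exfalso
      obtain ⟨k, hk⟩ := hx.1
      obtain ⟨f, hf⟩ := h k
      have hk2 : ext (c'.ed k) = r.1.1 := hk
      rw [hf] at hk2
      have : t f.1 = v := by rw [show (f.1 : E) = r.1.1 from hk2]; exact r.2.1
      exact f.2.2 this
  · rintro ⟨k, rfl⟩
    obtain ⟨f, hf⟩ := h k
    rw [hf]
    exact ⟨k, by show ext (c'.ed k) = f.1; rw [hf]; exact rfl⟩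

lemma ve_ne (c : CycleData s t) (h0 : c.ve 0 = v) {k : ℕ} (h1 : 0 < k) (h2 : k < c.n) :
    c.ve ((k : ℕ) : ZMod c.n) ≠ v := by
  intro hvv
  have h3 : ((k : ℕ) : ZMod c.n) = 0 := c.inj (by rw [hvv, h0])
  rw [ZMod.natCast_eq_zero_iff] at h3
  have := Nat.le_of_dvd h1 h3
  omega

/-- contraction of a cycle through `v` (rotated so that `v` sits at position 0) -/
def contract (c : CycleData s t) (h0 : c.ve 0 = v) (hn : 2 ≤ c.n) :
    CycleData (RedS s t v hl) (RedT s t v hl) where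
  n := c.n - 1
  pos := by omega
  ve i := ⟨c.ve ((i.val + 1 : ℕ)), by
    haveI : NeZero (c.n - 1) := ⟨by omega⟩
    exact ve_ne c h0 (by omega) (by have := ZMod.val_lt i; omega)⟩
  ed i :=
    if h : i.val + 1 < c.n - 1 then
      .inl ⟨c.ed ((i.val + 1 : ℕ)),
        by rw [c.hs]; exact ve_ne c h0 (by omega) (by omega),
        by
          rw [c.ht]
          have hc : ((i.val + 1 : ℕ) : ZMod c.n) + 1 = ((i.val + 2 : ℕ) : ZMod c.n) := by
            push_cast; ring
          rw [hc]
          exact ve_ne c h0 (by omega) (by omega)⟩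
    else
      .inr ⟨(c.ed (-1), c.ed 0),
        by rw [c.ht]; rw [neg_add_cancel]; exact h0,
        by rw [c.hs]; exact h0⟩
  inj a b h := by
    haveI : NeZero (c.n - 1) := ⟨by omega⟩
    have ha := ZMod.val_lt a
    have hb := ZMod.val_lt b
    have h2 : c.ve ((a.val + 1 : ℕ)) = c.ve ((b.val + 1 : ℕ)) := congrArg Subtype.val h
    have h3 := c.inj h2
    have h4 : a.val + 1 = b.val + 1 := by
      have := congrArg ZMod.val h3
      rwa [ZMod.val_natCast_of_lt (by omega), ZMod.val_natCast_of_lt (by omega)] at this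
    exact ZMod.val_injective _ (by omega)
  hs i := by
    haveI : NeZero (c.n - 1) := ⟨by omega⟩
    by_cases h : i.val + 1 < c.n - 1
    · show RedS s t v hl (dite _ _ _) = _
      erw [dif_pos h]
      exact Subtype.ext (c.hs _)
    · show RedS s t v hl (dite _ _ _) = _
      erw [dif_neg h]
      have hv := ZMod.val_lt i
      have he : i.val + 1 = c.n - 1 := by omega
      apply Subtype.ext
      show s (c.ed (-1)) = c.ve ((i.val + 1 : ℕ))
      rw [c.hs, he, cast_pred (by omega)]
  ht i := by
    haveI : NeZero (c.n - 1) := ⟨by omega⟩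
    have hv := ZMod.val_lt i
    have hadd := val_add_one i
    by_cases h : i.val + 1 < c.n - 1
    · show RedT s t v hl (dite _ _ _) = _
      erw [dif_pos h]
      apply Subtype.ext
      show t (c.ed ((i.val + 1 : ℕ))) = c.ve (((i + 1).val + 1 : ℕ))
      have h2 : (i + 1).val = i.val + 1 := by rw [hadd, if_neg (by omega)]
      rw [c.ht, h2]
      congr 1
      push_cast
      ring
    · show RedT s t v hl (dite _ _ _) = _
      erw [dif_neg h]
      apply Subtype.ext
      show t (c.ed 0) = c.ve (((i + 1).val + 1 : ℕ))
      have h2 : (i + 1).val = 0 := by rw [hadd, if_pos (by omega)]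
      rw [c.ht, h2, zero_add]
      norm_num

lemma contract_range (c : CycleData s t) (h0 : c.ve 0 = v) (hn : 2 ≤ c.n) :
    Set.range (contract (hl := hl) c h0 hn).ed = Phi s t v (Set.range c.ed) := by
  haveI : NeZero c.n := ⟨by omega⟩
  haveI : NeZero (c.n - 1) := ⟨by omega⟩
  ext x
  constructor
  · rintro ⟨m, rfl⟩
    have hv : m.val < c.n - 1 := ZMod.val_lt (n := c.n - 1) m
    by_cases h : m.val + 1 < c.n - 1
    · have he : (contract (hl := hl) c h0 hn).ed m =
          Sum.inl ⟨c.ed ((m.val + 1 : ℕ)),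
            by rw [c.hs]; exact ve_ne c h0 (by omega) (by omega),
            by
              rw [c.ht]
              have hc : ((m.val + 1 : ℕ) : ZMod c.n) + 1 = ((m.val + 2 : ℕ) : ZMod c.n) := by
                push_cast; ring
              rw [hc]
              exact ve_ne c h0 (by omega) (by omega)⟩ := dif_pos h
      rw [he]
      exact ⟨_, rfl⟩
    · have he : (contract (hl := hl) c h0 hn).ed m =
          Sum.inr ⟨(c.ed (-1), c.ed 0),
            by rw [c.ht]; rw [neg_add_cancel]; exact h0,
            by rw [c.hs]; exact h0⟩ := dif_neg h
      rw [he]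
      exact ⟨⟨_, rfl⟩, ⟨_, rfl⟩⟩
  · intro hx
    match x with
    | .inl e =>
      obtain ⟨k, hk⟩ := hx
      -- k.val is in [1, c.n - 2]
      have hkv := ZMod.val_lt k
      have hk0 : k.val ≠ 0 := by
        intro h
        apply e.2.1
        rw [← hk, c.hs, ← h0]
        congr 1
        exact ZMod.val_injective _ (by rw [h, ZMod.val_zero])
      have hkn : k.val ≠ c.n - 1 := by
        intro h
        apply e.2.2
        rw [← hk, c.ht, ← h0]
        congr 1
        have : k = ((c.n - 1 : ℕ) : ZMod c.n) := by
          rw [← cast_val k, h]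
        rw [this, cast_pred (by omega), neg_add_cancel]
      refine ⟨((k.val - 1 : ℕ) : ZMod (c.n - 1)), ?_⟩
      have hval : (((k.val - 1 : ℕ) : ZMod (c.n - 1))).val = k.val - 1 :=
        ZMod.val_natCast_of_lt (by omega)
      have h : (((k.val - 1 : ℕ) : ZMod (c.n - 1))).val + 1 < c.n - 1 := by omega
      have hidx : (((((k.val - 1 : ℕ) : ZMod (c.n - 1))).val + 1 : ℕ) : ZMod c.n) = k := by
        have hee : ((((k.val - 1 : ℕ) : ZMod (c.n - 1))).val + 1 : ℕ) = k.val := by omega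
        rw [hee, cast_val]
      have he : (contract (hl := hl) c h0 hn).ed ((k.val - 1 : ℕ) : ZMod (c.n - 1)) =
          Sum.inl ⟨c.ed (((((k.val - 1 : ℕ) : ZMod (c.n - 1))).val + 1 : ℕ)),
            by rw [c.hs]; exact ve_ne c h0 (by omega) (by omega),
            by
              rw [c.ht]
              have hc : (((((k.val - 1 : ℕ) : ZMod (c.n - 1))).val + 1 : ℕ) : ZMod c.n) + 1
                  = (((((k.val - 1 : ℕ) : ZMod (c.n - 1))).val + 2 : ℕ) : ZMod c.n) := by
                push_cast; ring
              rw [hc]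
              exact ve_ne c h0 (by omega) (by omega)⟩ := dif_pos h
      rw [he]
      congr 1
      apply Subtype.ext
      show c.ed _ = e.1
      rw [hidx, hk]
    | .inr r =>
      obtain ⟨k, hk⟩ := hx.1
      obtain ⟨m, hm⟩ := hx.2
      have hkeq : k = -1 := by
        have h2 : c.ve (k + 1) = c.ve 0 := by rw [← c.ht, hk, r.2.1, h0]
        have := c.inj h2
        linear_combination this
      have hmeq : m = 0 := by
        have h2 : c.ve m = c.ve 0 := by rw [← c.hs, hm, r.2.2, h0]
        exact c.inj h2
      refine ⟨((c.n - 2 : ℕ) : ZMod (c.n - 1)), ?_⟩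
      have hval : (((c.n - 2 : ℕ) : ZMod (c.n - 1))).val = c.n - 2 :=
        ZMod.val_natCast_of_lt (by omega)
      have h : ¬ ((((c.n - 2 : ℕ) : ZMod (c.n - 1))).val + 1 < c.n - 1) := by omega
      have he : (contract (hl := hl) c h0 hn).ed ((c.n - 2 : ℕ) : ZMod (c.n - 1)) =
          Sum.inr ⟨(c.ed (-1), c.ed 0),
            by rw [c.ht]; rw [neg_add_cancel]; exact h0,
            by rw [c.hs]; exact h0⟩ := dif_neg h
      rw [he]
      congr 1
      apply Subtype.ext
      show (c.ed (-1), c.ed 0) = r.1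
      have h1 : c.ed (-1) = r.1.1 := by rw [← hkeq]; exact hk
      have h2 : c.ed 0 = r.1.2 := by rw [← hmeq]; exact hm
      rw [h1, h2]

section Gap

variable (c' : CycleData (RedS s t v hl) (RedT s t v hl)) (j : ℕ)
  (p q : {p : E × E // t p.1 = v ∧ s p.2 = v})
  (hstart : c'.ed (-1) = .inr p) (hj : j < c'.n)
  (hlast : c'.ed ((j : ℕ) : ZMod c'.n) = .inr q)
  (hprev : ∀ k : ℕ, k < j → ∃ e, c'.ed ((k : ℕ) : ZMod c'.n) = .inl e)

/-- the cycle of the original digraph obtained from a maximal "old-edge" arc of a reduced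
cycle, closed up through `v`. -/
def gapCycle : CycleData s t where
  n := j + 2
  pos := by omega
  ve i := if i.val = 0 then v else (c'.ve ((i.val - 1 : ℕ) : ZMod c'.n)).1
  ed i := if i.val = 0 then p.1.2 else if i.val = j + 1 then q.1.1
          else ext (c'.ed ((i.val - 1 : ℕ) : ZMod c'.n))
  inj i i' h := by
    haveI : NeZero (j + 2) := ⟨by omega⟩
    haveI : NeZero c'.n := ⟨c'.pos.ne'⟩
    have hi := ZMod.val_lt i
    have hi' := ZMod.val_lt i'
    have hh : (if i.val = 0 then v else (c'.ve ((i.val - 1 : ℕ) : ZMod c'.n)).1)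
            = (if i'.val = 0 then v else (c'.ve ((i'.val - 1 : ℕ) : ZMod c'.n)).1) := h
    by_cases h1 : i.val = 0 <;> by_cases h2 : i'.val = 0
    · exact ZMod.val_injective _ (by omega)
    · rw [if_pos h1, if_neg h2] at hh
      exact absurd hh.symm (c'.ve _).2
    · rw [if_neg h1, if_pos h2] at hh
      exact absurd hh (c'.ve _).2
    · rw [if_neg h1, if_neg h2] at hh
      have h3 := c'.inj (Subtype.ext hh)
      have h4 := congrArg ZMod.val h3
      rw [ZMod.val_natCast_of_lt (by omega), ZMod.val_natCast_of_lt (by omega)] at h4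
      exact ZMod.val_injective _ (by omega)
  hs i := by
    haveI : NeZero (j + 2) := ⟨by omega⟩
    haveI : NeZero c'.n := ⟨c'.pos.ne'⟩
    have hi := ZMod.val_lt i
    show s (if i.val = 0 then p.1.2 else if i.val = j + 1 then q.1.1
            else ext (c'.ed ((i.val - 1 : ℕ) : ZMod c'.n)))
        = (if i.val = 0 then v else (c'.ve ((i.val - 1 : ℕ) : ZMod c'.n)).1)
    by_cases h1 : i.val = 0
    · rw [if_pos h1, if_pos h1]; exact p.2.2
    · rw [if_neg h1, if_neg h1]
      by_cases h2 : i.val = j + 1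
      · rw [if_pos h2]
        have h3 := congrArg Subtype.val (c'.hs ((j : ℕ) : ZMod c'.n))
        rw [hlast] at h3
        have h4 : s q.1.1 = (c'.ve ((j : ℕ) : ZMod c'.n)).1 := h3
        have hij : i.val - 1 = j := by omega
        rw [hij]
        exact h4
      · rw [if_neg h2]
        obtain ⟨f, hf⟩ := hprev (i.val - 1) (by omega)
        rw [hf]
        have h3 := congrArg Subtype.val (c'.hs ((i.val - 1 : ℕ) : ZMod c'.n))
        rw [hf] at h3
        exact h3
  ht i := by
    haveI : NeZero (j + 2) := ⟨by omega⟩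
    haveI : NeZero c'.n := ⟨c'.pos.ne'⟩
    have hi := ZMod.val_lt i
    have hadd := val_add_one i
    show t (if i.val = 0 then p.1.2 else if i.val = j + 1 then q.1.1
            else ext (c'.ed ((i.val - 1 : ℕ) : ZMod c'.n)))
        = (if (i + 1).val = 0 then v
           else (c'.ve (((i + 1).val - 1 : ℕ) : ZMod c'.n)).1)
    by_cases h2 : i.val = j + 1
    · have hz : (i + 1).val = 0 := by rw [hadd, if_pos (by omega)]
      rw [if_neg (by omega), if_pos h2, if_pos hz]
      exact q.2.1
    · have hz : (i + 1).val = i.val + 1 := by rw [hadd, if_neg (by omega)]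
      by_cases h1 : i.val = 0
      · rw [if_pos h1]
        have h3 := congrArg Subtype.val (c'.ht (-1))
        rw [hstart] at h3
        have h4 : t p.1.2 = (c'.ve (-1 + 1)).1 := h3
        rw [neg_add_cancel] at h4
        rw [if_neg (by omega), h4]
        have h5 : (i + 1).val - 1 = 0 := by omega
        rw [h5]
        norm_num
      · rw [if_neg h1, if_neg h2]
        obtain ⟨f, hf⟩ := hprev (i.val - 1) (by omega)
        rw [hf]
        have h3 := congrArg Subtype.val (c'.ht ((i.val - 1 : ℕ) : ZMod c'.n))
        rw [hf] at h3
        have h5 : ((i.val - 1 : ℕ) : ZMod c'.n) + 1 = ((i.val : ℕ) : ZMod c'.n) := by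
          rw [← Nat.cast_add_one]
          congr 1
          omega
        have h6 : t f.1 = (c'.ve ((i.val : ℕ) : ZMod c'.n)).1 := by rw [← h5]; exact h3
        rw [if_neg (show ¬(i + 1).val = 0 by omega)]
        have h7 : (i + 1).val - 1 = i.val := by omega
        rw [h7]
        exact h6

lemma gapCycle_ve_zero : (gapCycle c' j p q hstart hj hlast hprev).ve 0 = v := by
  haveI : NeZero (j + 2) := ⟨by omega⟩
  show (if (0 : ZMod (j + 2)).val = 0 then v
        else (c'.ve (((0 : ZMod (j + 2)).val - 1 : ℕ) : ZMod c'.n)).1) = v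
  rw [if_pos ZMod.val_zero]

lemma gapCycle_v_mem : v ∈ Set.range (gapCycle c' j p q hstart hj hlast hprev).ve :=
  ⟨0, gapCycle_ve_zero c' j p q hstart hj hlast hprev⟩

lemma gapCycle_in_edge {e : E} (he : e ∈ Set.range (gapCycle c' j p q hstart hj hlast hprev).ed)
    (hte : t e = v) : e = q.1.1 := by
  haveI : NeZero (j + 2) := ⟨by omega⟩
  obtain ⟨m, rfl⟩ := he
  have h1 : (gapCycle c' j p q hstart hj hlast hprev).ve (m + 1) = v :=
    ((gapCycle c' j p q hstart hj hlast hprev).ht m).symm.trans hte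
  have h2 : (m + 1).val = 0 := by
    by_contra h2
    have h3 : (gapCycle c' j p q hstart hj hlast hprev).ve (m + 1)
        = (c'.ve ((((m + 1).val - 1 : ℕ)) : ZMod c'.n)).1 := if_neg h2
    rw [h3] at h1
    exact (c'.ve _).2 h1
  have hmv : m.val < j + 2 := ZMod.val_lt (n := j + 2) m
  have hm : m.val = j + 1 := by
    have hadd : (m + 1).val = if m.val = (j + 2) - 1 then 0 else m.val + 1 :=
      val_add_one (n := j + 2) m
    by_cases hc : m.val = (j + 2) - 1
    · omega
    · rw [if_neg hc] at hadd; omega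
  show (if m.val = 0 then p.1.2 else if m.val = j + 1 then q.1.1
        else ext (c'.ed ((m.val - 1 : ℕ) : ZMod c'.n))) = q.1.1
  rw [if_neg (by omega), if_pos hm]

lemma gapCycle_out_edge {e : E} (he : e ∈ Set.range (gapCycle c' j p q hstart hj hlast hprev).ed)
    (hse : s e = v) : e = p.1.2 := by
  haveI : NeZero (j + 2) := ⟨by omega⟩
  obtain ⟨m, rfl⟩ := he
  have h1 : (gapCycle c' j p q hstart hj hlast hprev).ve m = v :=
    ((gapCycle c' j p q hstart hj hlast hprev).hs m).symm.trans hse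
  have h2 : m.val = 0 := by
    by_contra h2
    have h3 : (gapCycle c' j p q hstart hj hlast hprev).ve m
        = (c'.ve (((m.val - 1 : ℕ)) : ZMod c'.n)).1 := if_neg h2
    rw [h3] at h1
    exact (c'.ve _).2 h1
  show (if m.val = 0 then p.1.2 else if m.val = j + 1 then q.1.1
        else ext (c'.ed ((m.val - 1 : ℕ) : ZMod c'.n))) = p.1.2
  rw [if_pos h2]

lemma gapCycle_mem_q : q.1.1 ∈ Set.range (gapCycle c' j p q hstart hj hlast hprev).ed := by
  haveI : NeZero (j + 2) := ⟨by omega⟩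
  refine ⟨((j + 1 : ℕ) : ZMod (j + 2)), ?_⟩
  have hval : (((j + 1 : ℕ) : ZMod (j + 2))).val = j + 1 := ZMod.val_natCast_of_lt (by omega)
  show (if (((j + 1 : ℕ) : ZMod (j + 2))).val = 0 then p.1.2
        else if (((j + 1 : ℕ) : ZMod (j + 2))).val = j + 1 then q.1.1
        else ext (c'.ed (((((j + 1 : ℕ) : ZMod (j + 2))).val - 1 : ℕ) : ZMod c'.n))) = q.1.1
  rw [if_neg (by omega), if_pos (by omega)]

lemma gapCycle_mem_p2 : p.1.2 ∈ Set.range (gapCycle c' j p q hstart hj hlast hprev).ed := by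
  haveI : NeZero (j + 2) := ⟨by omega⟩
  refine ⟨0, ?_⟩
  show (if (0 : ZMod (j + 2)).val = 0 then p.1.2
        else if (0 : ZMod (j + 2)).val = j + 1 then q.1.1
        else ext (c'.ed ((((0 : ZMod (j + 2))).val - 1 : ℕ) : ZMod c'.n))) = p.1.2
  rw [if_pos ZMod.val_zero]

lemma gapCycle_mem_mid (k : ℕ) (hk : k < j) :
    ext (c'.ed ((k : ℕ) : ZMod c'.n)) ∈
      Set.range (gapCycle c' j p q hstart hj hlast hprev).ed := by
  haveI : NeZero (j + 2) := ⟨by omega⟩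
  refine ⟨((k + 1 : ℕ) : ZMod (j + 2)), ?_⟩
  have hval : (((k + 1 : ℕ) : ZMod (j + 2))).val = k + 1 := ZMod.val_natCast_of_lt (by omega)
  show (if (((k + 1 : ℕ) : ZMod (j + 2))).val = 0 then p.1.2
        else if (((k + 1 : ℕ) : ZMod (j + 2))).val = j + 1 then q.1.1
        else ext (c'.ed (((((k + 1 : ℕ) : ZMod (j + 2))).val - 1 : ℕ) : ZMod c'.n)))
      = ext (c'.ed ((k : ℕ) : ZMod c'.n))
  rw [if_neg (by omega), if_neg (by omega)]
  have h1 : (((k + 1 : ℕ) : ZMod (j + 2))).val - 1 = k := by omega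
  rw [h1]

lemma gapCycle_ve_mem (k : ZMod c'.n) (hk : k.val ≤ j) :
    (c'.ve k).1 ∈ Set.range (gapCycle c' j p q hstart hj hlast hprev).ve := by
  haveI : NeZero (j + 2) := ⟨by omega⟩
  haveI : NeZero c'.n := ⟨c'.pos.ne'⟩
  refine ⟨((k.val + 1 : ℕ) : ZMod (j + 2)), ?_⟩
  have hval : (((k.val + 1 : ℕ) : ZMod (j + 2))).val = k.val + 1 :=
    ZMod.val_natCast_of_lt (by omega)
  show (if (((k.val + 1 : ℕ) : ZMod (j + 2))).val = 0 then v
        else (c'.ve (((((k.val + 1 : ℕ) : ZMod (j + 2))).val - 1 : ℕ) : ZMod c'.n)).1)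
      = (c'.ve k).1
  rw [if_neg (by omega)]
  have h1 : (((k.val + 1 : ℕ) : ZMod (j + 2))).val - 1 = k.val := by omega
  rw [h1, cast_val]

lemma gapCycle_full_range (hfull : j = c'.n - 1) :
    Phi s t v (Set.range (gapCycle c' j p q hstart hj hlast hprev).ed)
      = Set.range c'.ed := by
  haveI : NeZero (j + 2) := ⟨by omega⟩
  haveI : NeZero c'.n := ⟨c'.pos.ne'⟩
  have hqp : q = p := by
    have h1 := hstart
    rw [← cast_pred c'.pos, ← hfull, hlast] at h1
    exact Sum.inr.inj h1
  ext x
  constructor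
  · intro hx
    match x with
    | .inl e =>
      obtain ⟨m, hm⟩ := hx
      have hmv := ZMod.val_lt (n := j + 2) m
      have h1 : m.val ≠ 0 := by
        intro h0
        have hed : (gapCycle c' j p q hstart hj hlast hprev).ed m = p.1.2 := by
          show (if m.val = 0 then p.1.2 else if m.val = j + 1 then q.1.1
                else ext (c'.ed ((m.val - 1 : ℕ) : ZMod c'.n))) = p.1.2
          rw [if_pos h0]
        exact e.2.1 (by rw [← hm, hed]; exact p.2.2)
      have h2 : m.val ≠ j + 1 := by
        intro h0
        have hed : (gapCycle c' j p q hstart hj hlast hprev).ed m = q.1.1 := by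
          show (if m.val = 0 then p.1.2 else if m.val = j + 1 then q.1.1
                else ext (c'.ed ((m.val - 1 : ℕ) : ZMod c'.n))) = q.1.1
          rw [if_neg h1, if_pos h0]
        exact e.2.2 (by rw [← hm, hed]; exact q.2.1)
      have hed : (gapCycle c' j p q hstart hj hlast hprev).ed m
          = ext (c'.ed ((m.val - 1 : ℕ) : ZMod c'.n)) := by
        show (if m.val = 0 then p.1.2 else if m.val = j + 1 then q.1.1
              else ext (c'.ed ((m.val - 1 : ℕ) : ZMod c'.n)))
            = ext (c'.ed ((m.val - 1 : ℕ) : ZMod c'.n))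
        rw [if_neg h1, if_neg h2]
      obtain ⟨f, hf⟩ := hprev (m.val - 1) (by
        have h1' : ZMod.val (n := j + 2) m ≠ 0 := h1
        have h2' : ZMod.val (n := j + 2) m ≠ j + 1 := h2
        show ZMod.val (n := j + 2) m - 1 < j
        omega)
      rw [hed, hf] at hm
      refine ⟨((m.val - 1 : ℕ) : ZMod c'.n), ?_⟩
      rw [hf]
      exact congrArg Sum.inl (Subtype.ext hm)
    | .inr r =>
      have h1 : r.1.1 = q.1.1 :=
        gapCycle_in_edge c' j p q hstart hj hlast hprev hx.1 r.2.1
      have h2 : r.1.2 = p.1.2 :=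
        gapCycle_out_edge c' j p q hstart hj hlast hprev hx.2 r.2.2
      refine ⟨-1, ?_⟩
      rw [hstart]
      congr 1
      apply Subtype.ext
      apply Prod.ext
      · show p.1.1 = r.1.1
        rw [h1, hqp]
      · show p.1.2 = r.1.2
        exact h2.symm
  · rintro ⟨k, rfl⟩
    have hkv := ZMod.val_lt k
    by_cases hc : k.val < c'.n - 1
    · obtain ⟨f, hf⟩ := hprev k.val (by omega)
      rw [cast_val] at hf
      rw [hf]
      have h1 := gapCycle_mem_mid c' j p q hstart hj hlast hprev k.val (by omega)
      rw [cast_val, hf] at h1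
      exact h1
    · have hk1 : k.val = c'.n - 1 := by omega
      have hk2 : k = -1 := by rw [← cast_val k, hk1, cast_pred c'.pos]
      rw [hk2, hstart]
      constructor
      · have h1 := gapCycle_mem_q c' j p q hstart hj hlast hprev
        rw [show (↑p : E × E).1 = (↑q : E × E).1 from by rw [hqp]]
        exact h1
      · exact gapCycle_mem_p2 c' j p q hstart hj hlast hprev

end Gap

lemma only_one (hdisj : DisjointCycles s t)
    (c' : CycleData (RedS s t v hl) (RedT s t v hl))
    (p : {p : E × E // t p.1 = v ∧ s p.2 = v}) (hstart : c'.ed (-1) = .inr p) :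
    ∀ k : ℕ, k < c'.n - 1 → ∃ e, c'.ed ((k : ℕ) : ZMod c'.n) = .inl e := by
  classical
  haveI : NeZero c'.n := ⟨c'.pos.ne'⟩
  have hEx : ∃ k : ℕ, ∃ q, c'.ed ((k : ℕ) : ZMod c'.n) = Sum.inr q :=
    ⟨c'.n - 1, p, by rw [cast_pred c'.pos]; exact hstart⟩
  obtain ⟨q1, hq1⟩ := Nat.find_spec hEx
  have hj1le : Nat.find hEx ≤ c'.n - 1 :=
    Nat.find_min' hEx ⟨p, by rw [cast_pred c'.pos]; exact hstart⟩
  have hmin : ∀ k : ℕ, k < Nat.find hEx → ∃ e, c'.ed ((k : ℕ) : ZMod c'.n) = Sum.inl e := by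
    intro k hk
    have h2 := Nat.find_min hEx hk
    cases he : c'.ed ((k : ℕ) : ZMod c'.n) with
    | inl e => exact ⟨e, rfl⟩
    | inr r => exact absurd ⟨r, he⟩ h2
  by_cases hcase : Nat.find hEx = c'.n - 1
  · intro k hk
    exact hmin k (by omega)
  · exfalso
    have hj1lt : Nat.find hEx < c'.n - 1 := by omega
    have hstart2 : (rot c' (((Nat.find hEx + 1 : ℕ) : ZMod c'.n))).ed (-1) = Sum.inr q1 := by
      show c'.ed (-1 + ((Nat.find hEx + 1 : ℕ) : ZMod c'.n)) = _
      rw [show -1 + ((Nat.find hEx + 1 : ℕ) : ZMod c'.n) = ((Nat.find hEx : ℕ) : ZMod c'.n) by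
        push_cast; ring]
      exact hq1
    have hEx2 : ∃ k : ℕ, ∃ r,
        (rot c' (((Nat.find hEx + 1 : ℕ) : ZMod c'.n))).ed ((k : ℕ) : ZMod c'.n) = Sum.inr r := by
      refine ⟨c'.n - 1, q1, ?_⟩
      rw [cast_pred c'.pos]
      exact hstart2
    obtain ⟨q2, hq2⟩ := Nat.find_spec hEx2
    have hj2le : Nat.find hEx2 ≤ c'.n - 1 := by
      apply Nat.find_min' hEx2
      refine ⟨q1, ?_⟩
      rw [cast_pred c'.pos]
      exact hstart2
    have hmin2 : ∀ k : ℕ, k < Nat.find hEx2 →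
        ∃ e, (rot c' (((Nat.find hEx + 1 : ℕ) : ZMod c'.n))).ed ((k : ℕ) : ZMod c'.n)
          = Sum.inl e := by
      intro k hk
      have h2 := Nat.find_min hEx2 hk
      cases he : (rot c' (((Nat.find hEx + 1 : ℕ) : ZMod c'.n))).ed ((k : ℕ) : ZMod c'.n) with
      | inl e => exact ⟨e, rfl⟩
      | inr r => exact absurd ⟨r, he⟩ h2
    have hvmem : (Set.range (gapCycle c' (Nat.find hEx) p q1 hstart (by omega) hq1 hmin).ve ∩
        Set.range (gapCycle (rot c' (((Nat.find hEx + 1 : ℕ) : ZMod c'.n))) (Nat.find hEx2)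
          q1 q2 hstart2 (show Nat.find hEx2 < c'.n by omega) hq2 hmin2).ve).Nonempty :=
      ⟨v, gapCycle_v_mem _ _ _ _ _ _ _ _, gapCycle_v_mem _ _ _ _ _ _ _ _⟩
    have hr := hdisj _ _ hvmem
    have hq1mem : q1.1.1 ∈ Set.range (gapCycle (rot c' (((Nat.find hEx + 1 : ℕ) : ZMod c'.n)))
        (Nat.find hEx2) q1 q2 hstart2 (show Nat.find hEx2 < c'.n by omega) hq2 hmin2).ed := by
      rw [← hr]
      exact gapCycle_mem_q c' (Nat.find hEx) p q1 hstart (by omega) hq1 hmin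
    have heq1 : q1.1.1 = q2.1.1 :=
      gapCycle_in_edge _ _ _ _ hstart2 (show Nat.find hEx2 < c'.n by omega) hq2 hmin2 hq1mem q1.2.1
    have e1 : s q1.1.1 = (c'.ve ((Nat.find hEx : ℕ) : ZMod c'.n)).1 := by
      have h3 := congrArg Subtype.val (c'.hs ((Nat.find hEx : ℕ) : ZMod c'.n))
      rw [hq1] at h3
      exact h3
    have e2 : s q2.1.1 = (c'.ve (((Nat.find hEx2 : ℕ) : ZMod c'.n)
        + ((Nat.find hEx + 1 : ℕ) : ZMod c'.n))).1 := by
      have h3 := congrArg Subtype.val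
        ((rot c' (((Nat.find hEx + 1 : ℕ) : ZMod c'.n))).hs ((Nat.find hEx2 : ℕ) : ZMod c'.n))
      rw [hq2] at h3
      exact h3
    have hveq : c'.ve ((Nat.find hEx : ℕ) : ZMod c'.n)
        = c'.ve (((Nat.find hEx2 : ℕ) : ZMod c'.n) + ((Nat.find hEx + 1 : ℕ) : ZMod c'.n)) :=
      Subtype.ext (by rw [← e1, heq1, e2])
    have hieq := c'.inj hveq
    have hz : ((Nat.find hEx2 + 1 : ℕ) : ZMod c'.n) = 0 := by
      push_cast at hieq ⊢
      linear_combination -hieq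
    rw [ZMod.natCast_eq_zero_iff] at hz
    have hj2n : Nat.find hEx2 = c'.n - 1 := by
      have := Nat.le_of_dvd (by omega) hz
      omega
    have hm : c'.n - 1 - (Nat.find hEx + 1) < Nat.find hEx2 := by omega
    have h4 := Nat.find_min hEx2 hm
    apply h4
    refine ⟨p, ?_⟩
    show c'.ed (((c'.n - 1 - (Nat.find hEx + 1) : ℕ) : ZMod c'.n)
        + ((Nat.find hEx + 1 : ℕ) : ZMod c'.n)) = _
    have hcast : ((c'.n - 1 - (Nat.find hEx + 1) : ℕ) : ZMod c'.n)
        + ((Nat.find hEx + 1 : ℕ) : ZMod c'.n) = ((c'.n - 1 : ℕ) : ZMod c'.n) := by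
      rw [← Nat.cast_add]
      congr 1
      omega
    rw [hcast, cast_pred c'.pos]
    exact hstart

lemma backward (hdisj : DisjointCycles s t)
    (c' : CycleData (RedS s t v hl) (RedT s t v hl)) :
    ∃ C : CycleData s t, Phi s t v (Set.range C.ed) = Set.range c'.ed ∧
      ∀ i, (c'.ve i).1 ∈ Set.range C.ve := by
  haveI : NeZero c'.n := ⟨c'.pos.ne'⟩
  by_cases hall : ∀ i, ∃ e, c'.ed i = .inl e
  case pos =>
    exact ⟨liftUp c' hall, liftUp_range c' hall, fun i => ⟨i, rfl⟩⟩
  case neg =>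
    have hex : ∃ i r, c'.ed i = .inr r := by
      by_contra hno
      apply hall
      intro i
      cases he : c'.ed i with
      | inl e => exact ⟨e, rfl⟩
      | inr r => exact (hno ⟨i, r, he⟩).elim
    obtain ⟨i0, r, hi0⟩ := hex
    have hstart : (rot c' (i0 + 1)).ed (-1) = Sum.inr r := by
      show c'.ed (-1 + (i0 + 1)) = _
      rw [show -1 + (i0 + 1) = i0 by ring]
      exact hi0
    have hprev := only_one hdisj (rot c' (i0 + 1)) r hstart
    have hlast : (rot c' (i0 + 1)).ed ((c'.n - 1 : ℕ) : ZMod c'.n) = Sum.inr r := by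
      rw [cast_pred c'.pos]
      exact hstart
    refine ⟨gapCycle (rot c' (i0 + 1)) (c'.n - 1) r r hstart
        (show c'.n - 1 < c'.n from Nat.sub_lt c'.pos one_pos) hlast hprev, ?_, ?_⟩
    · rw [gapCycle_full_range (rot c' (i0 + 1)) (c'.n - 1) r r hstart
        (show c'.n - 1 < c'.n from Nat.sub_lt c'.pos one_pos) hlast hprev rfl]
      exact rot_ed_range c' (i0 + 1)
    · intro i
      have h1 := gapCycle_ve_mem (rot c' (i0 + 1)) (c'.n - 1) r r hstart
        (show c'.n - 1 < c'.n from Nat.sub_lt c'.pos one_pos) hlast hprev ((i - (i0 + 1) : ZMod c'.n))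
        (by
          show ZMod.val (n := c'.n) (i - (i0 + 1)) ≤ c'.n - 1
          have := ZMod.val_lt (n := c'.n) (i - (i0 + 1))
          omega)
      have h2 : (rot c' (i0 + 1)).ve ((i - (i0 + 1) : ZMod c'.n)) = c'.ve i := by
        show c'.ve (i - (i0 + 1) + (i0 + 1)) = c'.ve i
        rw [sub_add_cancel]
      rw [← h2]
      exact h1

lemma forward (c : CycleData s t) :
    ∃ c' : CycleData (RedS s t v hl) (RedT s t v hl),
      Set.range c'.ed = Phi s t v (Set.range c.ed) := by
  by_cases hv : ∀ i, c.ve i ≠ v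
  · exact ⟨liftAway c hv, liftAway_range c hv⟩
  · push_neg at hv
    obtain ⟨j, hj⟩ := hv
    have h0 : (rot c j).ve 0 = v := by
      show c.ve (0 + j) = v
      rw [zero_add]
      exact hj
    have hn : 2 ≤ c.n := by
      by_contra h
      have hc1 : c.n = 1 := by have := c.pos; omega
      have h1 : (1 : ZMod c.n) = 0 := by
        rw [← Nat.cast_one (R := ZMod c.n), ← hc1]
        exact ZMod.natCast_self c.n
      apply hl (c.ed j)
      constructor
      · rw [c.hs]; exact hj
      · rw [c.ht, h1, add_zero]; exact hj
    refine ⟨contract (hl := hl) (rot c j) h0 hn, ?_⟩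
    rw [contract_range (rot c j) h0 hn, rot_ed_range]

lemma phi_sub (c₁ c₂ : CycleData s t)
    (h : Phi s t v (Set.range c₁.ed) ⊆ Phi s t v (Set.range c₂.ed)) :
    Set.range c₁.ed ⊆ Set.range c₂.ed := by
  rintro e ⟨k, rfl⟩
  by_cases hsv : s (c₁.ed k) = v
  · have htv : t (c₁.ed (k - 1)) = v := by
      rw [c₁.ht, sub_add_cancel, ← c₁.hs]
      exact hsv
    have hmem : Sum.inr ⟨(c₁.ed (k - 1), c₁.ed k), htv, hsv⟩
        ∈ Phi s t v (Set.range c₁.ed) := ⟨⟨k - 1, rfl⟩, ⟨k, rfl⟩⟩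
    exact (h hmem).2
  · by_cases htv : t (c₁.ed k) = v
    · have hg : s (c₁.ed (k + 1)) = v := by
        rw [c₁.hs, ← c₁.ht]
        exact htv
      have hmem : Sum.inr ⟨(c₁.ed k, c₁.ed (k + 1)), htv, hg⟩
          ∈ Phi s t v (Set.range c₁.ed) := ⟨⟨k, rfl⟩, ⟨k + 1, rfl⟩⟩
      exact (h hmem).1
    · have hmem : Sum.inl ⟨c₁.ed k, hsv, htv⟩ ∈ Phi s t v (Set.range c₁.ed) := ⟨k, rfl⟩
      exact h hmem

end S19


/-- If a finite digraph `Γ` has pairwise disjoint cycles and `Γ'` is a one-step reduction of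
`Γ` eliminating a loopless non-sink `v`, then `Γ'` also has pairwise disjoint cycles and the
cycles of `Γ'` are in bijection with the cycles of `Γ`. -/
theorem stmt19 {V E : Type} [Finite V] [Finite E] (s t : E → V)
    (hdisj : DisjointCycles s t)
    (v : V) (hl : ∀ e, ¬(s e = v ∧ t e = v)) (hns : ∃ e, s e = v) :
    DisjointCycles (RedS s t v hl) (RedT s t v hl) ∧
    Nonempty (CycleSets s t ≃ CycleSets (RedS s t v hl) (RedT s t v hl)) := by
  constructor
  · intro c₁' c₂' hne
    obtain ⟨w, ⟨a, ha⟩, ⟨b, hb⟩⟩ := hne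
    obtain ⟨C₁, hP₁, hV₁⟩ := S19.backward hdisj c₁'
    obtain ⟨C₂, hP₂, hV₂⟩ := S19.backward hdisj c₂'
    have hw : (Set.range C₁.ve ∩ Set.range C₂.ve).Nonempty := by
      refine ⟨w.1, ?_, ?_⟩
      · have h1 := hV₁ a
        rw [ha] at h1
        exact h1
      · have h1 := hV₂ b
        rw [hb] at h1
        exact h1
    have hd := hdisj C₁ C₂ hw
    rw [← hP₁, ← hP₂, hd]
  · refine ⟨Equiv.ofBijective (fun S => ⟨S19.Phi s t v S.1, ?_⟩) ⟨?_, ?_⟩⟩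
    · obtain ⟨c, hc⟩ := S.2
      obtain ⟨c', hc'⟩ := S19.forward (hl := hl) c
      exact ⟨c', by rw [hc, ← hc']⟩
    · rintro ⟨S₁, hS₁⟩ ⟨S₂, hS₂⟩ h
      obtain ⟨c₁, rfl⟩ := hS₁
      obtain ⟨c₂, rfl⟩ := hS₂
      have h2 : S19.Phi s t v (Set.range c₁.ed) = S19.Phi s t v (Set.range c₂.ed) :=
        congrArg Subtype.val h
      apply Subtype.ext
      show Set.range c₁.ed = Set.range c₂.ed
      exact le_antisymm (S19.phi_sub c₁ c₂ (le_of_eq h2))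
        (S19.phi_sub c₂ c₁ (le_of_eq h2.symm))
    · rintro ⟨T, hT⟩
      obtain ⟨c', rfl⟩ := hT
      obtain ⟨C, hC, -⟩ := S19.backward hdisj c'
      exact ⟨⟨Set.range C.ed, ⟨C, rfl⟩⟩, Subtype.ext hC⟩
end
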